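/- arXiv:1403.7404 — 5 statements merged into one kernel-verified Lean document; each statement's English description precedes it below -/
import Mathlib

section
/- The pentagon (wall-crossing) identity holds: A∘B = B∘C∘A as ℂ-algebra endomorphisms of ℂ[[x,y]]; equivalently, (A∘B)(x) = (B∘C∘A)(x) and (A∘B)(y) = (B∘C∘A)(y). -/
/-!
STATEMENT 6: The pentagon (wall-crossing) identity. For the ℂ-algebra
endomorphisms of `ℂ[[x,y]]` determined by the substitutions
`A: x ↦ x, y ↦ y(1+x)`, `B: x ↦ x(1+y)⁻¹, y ↦ y`,
`C: x ↦ x(1+xy)⁻¹, y ↦ y(1+xy)`, one has `A∘B = B∘C∘A` (B applied first);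
equivalently `(A∘B)(x) = (B∘C∘A)(x)` and `(A∘B)(y) = (B∘C∘A)(y)`.
-/

noncomputable section
open MvPowerSeries

/-- `ℂ[[x,y]]`, with `x = X 0` and `y = X 1`. -/
abbrev R2 : Type := MvPowerSeries (Fin 2) ℂ

/-- An algebra endomorphism maps the power-series inverse to the power-series
inverse, provided both constant coefficients are nonzero. -/
lemma algHom_map_inv (F : R2 →ₐ[ℂ] R2) (φ : R2)
    (h0 : constantCoeff (σ := Fin 2) (R := ℂ) φ ≠ 0)
    (h : constantCoeff (σ := Fin 2) (R := ℂ) (F φ) ≠ 0) :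
    F φ⁻¹ = (F φ)⁻¹ := by
  rw [MvPowerSeries.eq_inv_iff_mul_eq_one h, ← map_mul,
    MvPowerSeries.inv_mul_cancel φ h0, map_one]

theorem pentagon_identity
    (A B C : R2 →ₐ[ℂ] R2)
    (hAx : A (X 0) = X 0)
    (hAy : A (X 1) = X 1 * (1 + X 0))
    (hBx : B (X 0) = X 0 * (1 + X 1)⁻¹)
    (hBy : B (X 1) = X 1)
    (hCx : C (X 0) = X 0 * (1 + X 0 * X 1)⁻¹)
    (hCy : C (X 1) = X 1 * (1 + X 0 * X 1)) :
    (A.comp B) (X 0) = (B.comp (C.comp A)) (X 0) ∧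
    (A.comp B) (X 1) = (B.comp (C.comp A)) (X 1) := by
  set x : R2 := X 0 with hx
  set y : R2 := X 1 with hy
  -- basic constant coefficient facts
  have ccx : constantCoeff (σ := Fin 2) (R := ℂ) x = 0 := constantCoeff_X 0
  have ccy : constantCoeff (σ := Fin 2) (R := ℂ) y = 0 := constantCoeff_X 1
  have cc1y : constantCoeff (σ := Fin 2) (R := ℂ) (1 + y) ≠ 0 := by
    simp [ccy]
  have ccb : constantCoeff (σ := Fin 2) (R := ℂ) (x * (1 + y)⁻¹) = 0 := by
    simp [ccx]
  -- `b := B x`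
  set b : R2 := x * (1 + y)⁻¹ with hb
  have cc1xy : constantCoeff (σ := Fin 2) (R := ℂ) (1 + x * y) ≠ 0 := by
    simp [ccx, ccy]
  have cc1by : constantCoeff (σ := Fin 2) (R := ℂ) (1 + b * y) ≠ 0 := by
    simp [hb, ccx, ccy, ccb]
  -- A (1 + y) = 1 + y*(1+x)
  have hA1y : A (1 + y) = 1 + y * (1 + x) := by
    rw [map_add, map_one, hAy]
  have ccA1y : constantCoeff (σ := Fin 2) (R := ℂ) (A (1 + y)) ≠ 0 := by
    rw [hA1y]; simp [ccx, ccy]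
  -- B (1 + x*y) = 1 + b*y
  have hB1xy : B (1 + x * y) = 1 + b * y := by
    rw [map_add, map_one, map_mul, hBx, hBy]
  have ccB1xy : constantCoeff (σ := Fin 2) (R := ℂ) (B (1 + x * y)) ≠ 0 := by
    rw [hB1xy]; exact cc1by
  constructor
  · -- x component
    have lhs : (A.comp B) x = x * (1 + y * (1 + x))⁻¹ := by
      simp only [AlgHom.comp_apply]
      rw [hBx, map_mul, hAx, algHom_map_inv A (1 + y) cc1y ccA1y, hA1y]
    have rhs : (B.comp (C.comp A)) x = b * (1 + b * y)⁻¹ := by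
      simp only [AlgHom.comp_apply]
      rw [hAx, hCx, map_mul, hBx,
        algHom_map_inv B (1 + x * y) cc1xy ccB1xy, hB1xy]
    rw [lhs, rhs, hb]
    -- key factorization : 1 + y*(1+x) = (1+y) * (1 + b*y)
    have key : 1 + y * (1 + x) = (1 + y) * (1 + b * y) := by
      have h1 : (1 + y) * (1 + b * y) = 1 + y + (1 + y) * b * y := by ring
      have h2 : (1 + y) * b = x := by
        rw [hb, ← mul_assoc, mul_comm (1 + y) x, mul_assoc,
          MvPowerSeries.mul_inv_cancel _ cc1y, mul_one]
      rw [h1, h2]; ring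
    rw [key, MvPowerSeries.mul_inv_rev]
    ring
  · -- y component
    simp only [AlgHom.comp_apply, hAy, hCy, hCx, map_mul, map_add, map_one,
      hBx, hBy]
    rw [algHom_map_inv B (1 + x * y) cc1xy ccB1xy, hB1xy]
    -- goal : y*(1+x) = y*(1+b*y) * (1 + b*(1+b*y)⁻¹)
    have expand : y * (1 + b * y) * (1 + b * (1 + b * y)⁻¹)
        = y * (1 + b * y) + y * b * ((1 + b * y) * (1 + b * y)⁻¹) := by ring
    rw [expand, MvPowerSeries.mul_inv_cancel _ cc1by, mul_one]
    have h2 : b * (1 + y) = x := by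
      rw [hb, mul_assoc, MvPowerSeries.inv_mul_cancel _ cc1y, mul_one]
    calc y * (1 + x) = y + y * (b * (1 + y)) := by rw [h2]; ring
      _ = y * (1 + b * y) + y * b := by ring
end
end

section
/- For any Φ₁, …, Φ_m ∈ ℂ[[s₁,…,s_m]] with zero constant coefficients, there exists a unique m-tuple (E₁, …, E_m) of elements of ℂ[[s₁,…,s_m]] with zero constant coefficients satisfying the system of equations E_i = s_i · exp(Φ_i(E₁,…,E_m)) for all i = 1, …, m, where Φ_i(E₁,…,E_m) denotes substitution of the tuple E into Φ_i. -/
/-!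
STATEMENT 8: For any `Φ₁, …, Φ_m ∈ ℂ[[s₁,…,s_m]]` with zero constant
coefficients, there is a unique `m`-tuple `(E₁, …, E_m)` of power series with
zero constant coefficients satisfying `E_i = s_i · exp(Φ_i(E₁,…,E_m))` for all
`i`, where `Φ_i(E₁,…,E_m)` denotes substitution of the tuple `E` into `Φ_i`.
-/

noncomputable section
open MvPowerSeries

variable {m : ℕ}

/-- Total degree of a monomial exponent. -/
def degM (e : Fin m →₀ ℕ) : ℕ := ∑ i, e i

/-- Substitution of an `m`-tuple `E` of power series with zero constant
coefficients into a power series `Φ`: the coefficient of a monomial `e` in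
`Φ(E) = Σ_d (coeff d Φ)·∏ᵢ Eᵢ^{dᵢ}` is a finite sum. -/
def substM (E : Fin m → MvPowerSeries (Fin m) ℂ) (Φ : MvPowerSeries (Fin m) ℂ) :
    MvPowerSeries (Fin m) ℂ :=
  fun e => ∑ d ∈ Finset.Iic (Finsupp.equivFunOnFinite.symm fun _ : Fin m => degM e),
    MvPowerSeries.coeff d Φ * MvPowerSeries.coeff e (∏ i, E i ^ (d i))

/-- The exponential `exp(f) = Σ_k f^k/k!` of a power series `f` with zero
constant coefficient: coefficientwise a finite sum. -/
def expOf (f : MvPowerSeries (Fin m) ℂ) : MvPowerSeries (Fin m) ℂ :=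
  fun e => ∑ k ∈ Finset.range (degM e + 1),
    ((k.factorial : ℂ))⁻¹ * MvPowerSeries.coeff e (f ^ k)

/-! ### Auxiliary machinery -/

lemma degM_add (a b : Fin m →₀ ℕ) : degM (a + b) = degM a + degM b := by
  simp [degM, Finset.sum_add_distrib]

/-- Two power series agree on all coefficients of total degree at most `n`. -/
def AgreeD (n : ℕ) (f g : MvPowerSeries (Fin m) ℂ) : Prop :=
  ∀ e : Fin m →₀ ℕ, degM e ≤ n → MvPowerSeries.coeff e f = MvPowerSeries.coeff e g

lemma AgreeD.mul {n : ℕ} {f f' g g' : MvPowerSeries (Fin m) ℂ}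
    (hf : AgreeD n f f') (hg : AgreeD n g g') : AgreeD n (f * g) (f' * g') := by
  intro e he
  classical
  rw [coeff_mul, coeff_mul]
  refine Finset.sum_congr rfl fun p hp => ?_
  rw [Finset.HasAntidiagonal.mem_antidiagonal] at hp
  have h1 : degM p.1 + degM p.2 = degM e := by rw [← degM_add, hp]
  rw [hf p.1 (by omega), hg p.2 (by omega)]

lemma AgreeD.pow {n : ℕ} {f f' : MvPowerSeries (Fin m) ℂ}
    (hf : AgreeD n f f') (k : ℕ) : AgreeD n (f ^ k) (f' ^ k) := by
  induction k with
  | zero => intro e he; rfl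
  | succ k ih => rw [pow_succ, pow_succ]; exact ih.mul hf

lemma AgreeD.refl {n : ℕ} (f : MvPowerSeries (Fin m) ℂ) : AgreeD n f f := fun _ _ => rfl

lemma AgreeD.prod {n : ℕ} {ι : Type*} (s : Finset ι) (f f' : ι → MvPowerSeries (Fin m) ℂ)
    (h : ∀ i ∈ s, AgreeD n (f i) (f' i)) : AgreeD n (∏ i ∈ s, f i) (∏ i ∈ s, f' i) := by
  classical
  induction s using Finset.induction with
  | empty => simpa using AgreeD.refl 1
  | @insert a t hx ih =>
    rw [Finset.prod_insert hx, Finset.prod_insert hx]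
    exact (h a (Finset.mem_insert_self a t)).mul
      (ih fun i hi => h i (Finset.mem_insert_of_mem hi))

lemma AgreeD.substM {n : ℕ} {E E' : Fin m → MvPowerSeries (Fin m) ℂ}
    (h : ∀ i, AgreeD n (E i) (E' i)) (Φ : MvPowerSeries (Fin m) ℂ) :
    AgreeD n (substM E Φ) (substM E' Φ) := by
  intro e he
  rw [MvPowerSeries.coeff_apply, MvPowerSeries.coeff_apply]
  unfold _root_.substM
  refine Finset.sum_congr rfl fun d _ => ?_
  rw [AgreeD.prod Finset.univ _ _ (fun i _ => (h i).pow (d i)) e he]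

lemma AgreeD.expOf {n : ℕ} {f f' : MvPowerSeries (Fin m) ℂ}
    (h : AgreeD n f f') : AgreeD n (expOf f) (expOf f') := by
  intro e he
  rw [MvPowerSeries.coeff_apply, MvPowerSeries.coeff_apply]
  unfold _root_.expOf
  refine Finset.sum_congr rfl fun k _ => ?_
  rw [h.pow k e he]

/-- Abstract fixed-point principle: any self-map of tuples of power series whose
degree-`d` output coefficients depend only on input coefficients of degree `< d`
has a unique fixed point. -/
lemma fixed_point_exists_unique
    (F : (Fin m → MvPowerSeries (Fin m) ℂ) → (Fin m → MvPowerSeries (Fin m) ℂ))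
    (hF : ∀ (E E' : Fin m → MvPowerSeries (Fin m) ℂ) (e : Fin m →₀ ℕ),
        (∀ i e', degM e' < degM e →
          MvPowerSeries.coeff e' (E i) = MvPowerSeries.coeff e' (E' i)) →
        ∀ i, MvPowerSeries.coeff e (F E i) = MvPowerSeries.coeff e (F E' i)) :
    ∃! E, E = F E := by
  have claim : ∀ (N : ℕ) (E E' : Fin m → MvPowerSeries (Fin m) ℂ) (e : Fin m →₀ ℕ),
      degM e < N → ∀ i,
      MvPowerSeries.coeff e (F^[N] E i) = MvPowerSeries.coeff e (F^[N] E' i) := by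
    intro N
    induction N with
    | zero => intro E E' e he; omega
    | succ N ih =>
      intro E E' e he i
      rw [Function.iterate_succ_apply', Function.iterate_succ_apply']
      exact hF _ _ e (fun j e' he' => ih E E' e' (by omega) j) i
  have stab : ∀ (e : Fin m →₀ ℕ) (i : Fin m) (N N' : ℕ), degM e < N → degM e < N' →
      MvPowerSeries.coeff e (F^[N] 0 i) = MvPowerSeries.coeff e (F^[N'] 0 i) := by
    have key : ∀ (N N' : ℕ), N ≤ N' → ∀ (e : Fin m →₀ ℕ) (i : Fin m), degM e < N →
        MvPowerSeries.coeff e (F^[N] 0 i) = MvPowerSeries.coeff e (F^[N'] 0 i) := by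
      intro N N' hle e i he
      have : F^[N'] 0 = F^[N] (F^[N' - N] 0) := by
        rw [← Function.iterate_add_apply]
        congr 1
        omega
      rw [this]
      exact claim N 0 _ e he i
    intro e i N N' h1 h2
    rcases le_total N N' with h | h
    · exact key N N' h e i h1
    · exact (key N' N h e i h2).symm
  set Efix : Fin m → MvPowerSeries (Fin m) ℂ :=
    fun i => fun e => MvPowerSeries.coeff e (F^[degM e + 1] 0 i) with hEfix
  have hEcoeff : ∀ (i : Fin m) (e : Fin m →₀ ℕ),
      MvPowerSeries.coeff e (Efix i) = MvPowerSeries.coeff e (F^[degM e + 1] 0 i) := by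
    intro i e; rfl
  have hfix : Efix = F Efix := by
    funext i
    apply MvPowerSeries.ext
    intro e
    rw [hEcoeff]
    rw [Function.iterate_succ_apply']
    exact (hF (F^[degM e] 0) Efix e (fun j e' he' => by
      rw [hEcoeff]
      exact (stab e' j (degM e' + 1) (degM e) (by omega) he').symm ) i)
  refine ⟨Efix, hfix, ?_⟩
  intro E hE
  funext i
  apply MvPowerSeries.ext
  intro e
  have : ∀ (n : ℕ) (e : Fin m →₀ ℕ), degM e ≤ n → ∀ i,
      MvPowerSeries.coeff e (E i) = MvPowerSeries.coeff e (Efix i) := by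
    intro n
    induction n with
    | zero =>
      intro e he i
      rw [hE, hfix]
      exact hF E Efix e (fun j e' he' => by omega) i
    | succ n ih =>
      intro e he i
      rw [hE, hfix]
      exact hF E Efix e (fun j e' he' => ih e' (by omega) j) i
  exact this (degM e) e le_rfl i

theorem lagrange_fixed_point_exists_unique
    (m : ℕ) (Φ : Fin m → MvPowerSeries (Fin m) ℂ)
    (hΦ : ∀ i, constantCoeff (Φ i) = 0) :
    ∃! E : Fin m → MvPowerSeries (Fin m) ℂ,
      (∀ i, constantCoeff (E i) = 0) ∧
      (∀ i, E i = X i * expOf (substM E (Φ i))) := by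
  classical
  set F : (Fin m → MvPowerSeries (Fin m) ℂ) → (Fin m → MvPowerSeries (Fin m) ℂ) :=
    fun E i => X i * expOf (substM E (Φ i)) with hFdef
  have hF : ∀ (E E' : Fin m → MvPowerSeries (Fin m) ℂ) (e : Fin m →₀ ℕ),
      (∀ i e', degM e' < degM e →
        MvPowerSeries.coeff e' (E i) = MvPowerSeries.coeff e' (E' i)) →
      ∀ i, MvPowerSeries.coeff e (F E i) = MvPowerSeries.coeff e (F E' i) := by
    intro E E' e h i
    simp only [hFdef]
    rw [coeff_mul, coeff_mul]
    refine Finset.sum_congr rfl fun p hp => ?_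
    rw [Finset.HasAntidiagonal.mem_antidiagonal] at hp
    by_cases hx : MvPowerSeries.coeff p.1 (X i : MvPowerSeries (Fin m) ℂ) = 0
    · rw [hx, zero_mul, zero_mul]
    · have hp1 : p.1 = Finsupp.single i 1 := by
        rw [MvPowerSeries.coeff_X] at hx
        by_contra hc
        exact hx (if_neg hc)
      have hdeg1 : degM p.1 = 1 := by
        rw [hp1]
        simp [degM, Finsupp.single_apply]
      have hlt : degM p.2 < degM e := by
        have := degM_add p.1 p.2
        rw [hp] at this
        omega
      have hA : ∀ j, AgreeD (degM p.2) (E j) (E' j) := fun j e'' he'' =>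
        h j e'' (lt_of_le_of_lt he'' hlt)
      rw [(AgreeD.expOf (AgreeD.substM hA (Φ i))) p.2 le_rfl]
  obtain ⟨E₀, hE₀, huniq⟩ := fixed_point_exists_unique F hF
  refine ⟨E₀, ⟨?_, ?_⟩, ?_⟩
  · intro i
    have : E₀ i = F E₀ i := by rw [← hE₀]
    rw [this]
    simp only [hFdef]
    rw [map_mul, constantCoeff_X, zero_mul]
  · intro i
    conv_lhs => rw [hE₀]
  · intro E hE
    exact huniq E (funext fun i => hE.2 i)
end
end

section
/- Let c ∈ ℂ∖{0} and let z ∈ ℂ not lie on the open ray {−tc : t > 0}. Then M := sup_{t>0} |(−tc + z)/(−tc − z)| is finite, and for every R > 0 one has |∫₀^∞ (dt/t)·((−tc + z)/(−tc − z))·exp(−R(1/t + t|c|²))| ≤ M·√(π/(R|c|))·e^{−2R|c|}; in particular the integral tends to 0 as R → ∞. -/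
/-!
STATEMENT 12: Let `c ∈ ℂ∖{0}` and `z ∈ ℂ` off the open ray `{−tc : t > 0}`.
Then `M := sup_{t>0} |(−tc + z)/(−tc − z)|` is finite, and for every `R > 0`,
`|∫₀^∞ (dt/t)·((−tc + z)/(−tc − z))·exp(−R(1/t + t|c|²))|`
`≤ M·√(π/(R|c|))·e^{−2R|c|}`; in particular the integral tends to `0` as
`R → ∞`.
-/

open MeasureTheory Filter

open Set in
lemma key_est {k R : ℝ} (hk : 0 < k) (hR : 0 < R) :
    IntegrableOn (fun t : ℝ => t⁻¹ * Real.exp (-(R * (1 / t + t * k ^ 2)))) (Set.Ioi 0) ∧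
    (∫ t in Set.Ioi (0:ℝ), t⁻¹ * Real.exp (-(R * (1 / t + t * k ^ 2))))
      ≤ Real.sqrt (Real.pi / (R * k)) * Real.exp (-(2 * R * k)) := by
  set f : ℝ → ℝ := fun t => k * Real.sqrt t - (Real.sqrt t)⁻¹ with hf_def
  set f' : ℝ → ℝ := fun t => k * (1 / (2 * Real.sqrt t)) + (1 / (2 * Real.sqrt t)) / (Real.sqrt t) ^ 2 with hf'_def
  set g : ℝ → ℝ := fun u => 2 / Real.sqrt (u ^ 2 + 4 * k) * Real.exp (-(R * u ^ 2) - 2 * R * k) with hg_def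
  have hderiv : ∀ t ∈ Set.Ioi (0:ℝ), HasDerivWithinAt f (f' t) (Set.Ioi 0) t := by
    intro t ht
    have ht' : (0:ℝ) < t := ht
    have hs : Real.sqrt t ≠ 0 := ne_of_gt (Real.sqrt_pos.2 ht')
    have h1 : HasDerivAt Real.sqrt (1 / (2 * Real.sqrt t)) t := Real.hasDerivAt_sqrt (ne_of_gt ht')
    have h2 : HasDerivAt (fun t => k * Real.sqrt t - (Real.sqrt t)⁻¹)
        (k * (1 / (2 * Real.sqrt t)) - -(1 / (2 * Real.sqrt t)) / (Real.sqrt t) ^ 2) t :=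
      (h1.const_mul k).sub (h1.inv hs)
    have : k * (1 / (2 * Real.sqrt t)) - -(1 / (2 * Real.sqrt t)) / (Real.sqrt t) ^ 2 = f' t := by
      simp [hf'_def]; ring
    exact (this ▸ h2).hasDerivWithinAt
  have hmono : StrictMonoOn f (Set.Ioi 0) := by
    intro a ha b hb hab
    have ha' : (0:ℝ) < a := ha
    have hb' : (0:ℝ) < b := hb
    have hsa : 0 < Real.sqrt a := Real.sqrt_pos.2 ha'
    have hsb : 0 < Real.sqrt b := Real.sqrt_pos.2 hb'
    have hlt : Real.sqrt a < Real.sqrt b := Real.sqrt_lt_sqrt ha'.le hab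
    have h1 : k * Real.sqrt a < k * Real.sqrt b := by nlinarith
    have h2 : (Real.sqrt b)⁻¹ < (Real.sqrt a)⁻¹ := by
      exact inv_strictAnti₀ hsa hlt
    simp only [hf_def]
    nlinarith
  have hinj : InjOn f (Set.Ioi 0) := hmono.injOn
  -- key pointwise identity
  have hkey : ∀ t ∈ Set.Ioi (0:ℝ),
      |f' t| * g (f t) = t⁻¹ * Real.exp (-(R * (1 / t + t * k ^ 2))) := by
    intro t ht
    have ht' : (0:ℝ) < t := ht
    have hsa : 0 < Real.sqrt t := Real.sqrt_pos.2 ht'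
    set s := Real.sqrt t with hs_def
    have hst : s ^ 2 = t := Real.sq_sqrt ht'.le
    have hf'pos : 0 < f' t := by
      have : 0 < 1 / (2 * s) := by positivity
      have : 0 < (1 / (2 * s)) / s ^ 2 := by positivity
      have hk1 : 0 < k * (1 / (2 * s)) := by positivity
      simp only [hf'_def]; positivity
    rw [abs_of_pos hf'pos]
    have hsq : (f t) ^ 2 + 4 * k = (k * s + s⁻¹) ^ 2 := by
      simp only [hf_def, ← hs_def]
      have h1 : s⁻¹ * s = 1 := inv_mul_cancel₀ hsa.ne'
      have hss : s * s = t := by rw [← hst, pow_two]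
      nlinarith [hss, h1]
    have hsqrt : Real.sqrt ((f t) ^ 2 + 4 * k) = k * s + s⁻¹ := by
      rw [hsq, Real.sqrt_sq (by positivity)]
    have hexp : -(R * (f t) ^ 2) - 2 * R * k = -(R * (1 / t + t * k ^ 2)) := by
      simp only [hf_def]
      have h1 : s⁻¹ * s = 1 := inv_mul_cancel₀ hsa.ne'
      have h2 : (1:ℝ) / t = s⁻¹ * s⁻¹ := by
        rw [← hst, pow_two, one_div, mul_inv]
      have : (k * s - s⁻¹) ^ 2 = k ^ 2 * t + 1 / t - 2 * k := by
        rw [h2, ← hst]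
        nlinarith [h1]
      rw [this]; ring
    simp only [hg_def, hsqrt, hexp]
    have hne : k * s + s⁻¹ ≠ 0 := by positivity
    have : f' t * (2 / (k * s + s⁻¹)) = t⁻¹ := by
      simp only [hf'_def]
      rw [← hst]
      rw [Real.sqrt_sq hsa.le]
      field_simp
    calc f' t * (2 / (k * s + s⁻¹) * Real.exp (-(R * (1 / t + t * k ^ 2))))
        = (f' t * (2 / (k * s + s⁻¹))) * Real.exp (-(R * (1 / t + t * k ^ 2))) := by ring
      _ = t⁻¹ * Real.exp (-(R * (1 / t + t * k ^ 2))) := by rw [this]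
  -- g integrable with Gaussian majorant
  have hmaj : ∀ u : ℝ, g u ≤ (Real.sqrt k)⁻¹ * Real.exp (-(2*R*k)) * Real.exp (-R * u ^ 2) := by
    intro u
    have h1 : Real.sqrt (4 * k) ≤ Real.sqrt (u ^ 2 + 4 * k) :=
      Real.sqrt_le_sqrt (by nlinarith)
    have h4k : Real.sqrt (4 * k) = 2 * Real.sqrt k := by
      rw [show (4:ℝ) * k = 2^2 * k by ring, Real.sqrt_mul (by positivity), Real.sqrt_sq (by norm_num)]
    have hpos : 0 < Real.sqrt (u ^ 2 + 4 * k) := Real.sqrt_pos.2 (by positivity)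
    have h2 : 2 / Real.sqrt (u ^ 2 + 4 * k) ≤ (Real.sqrt k)⁻¹ := by
      calc 2 / Real.sqrt (u ^ 2 + 4 * k) ≤ 2 / Real.sqrt (4 * k) :=
            div_le_div_of_nonneg_left (by norm_num) (Real.sqrt_pos.2 (by positivity)) h1
        _ = (Real.sqrt k)⁻¹ := by
            rw [h4k]
            field_simp
    have h3 : Real.exp (-(R * u ^ 2) - 2 * R * k) = Real.exp (-R * u^2) * Real.exp (-(2*R*k)) := by
      rw [← Real.exp_add]; ring_nf
    simp only [hg_def, h3]
    have hexp_pos : (0:ℝ) < Real.exp (-R * u^2) * Real.exp (-(2*R*k)) := by positivity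
    calc 2 / Real.sqrt (u ^ 2 + 4 * k) * (Real.exp (-R * u ^ 2) * Real.exp (-(2 * R * k)))
        ≤ (Real.sqrt k)⁻¹ * (Real.exp (-R * u ^ 2) * Real.exp (-(2 * R * k))) := by
          exact mul_le_mul_of_nonneg_right h2 hexp_pos.le
      _ = (Real.sqrt k)⁻¹ * Real.exp (-(2 * R * k)) * Real.exp (-R * u ^ 2) := by ring
  have hg_nonneg : ∀ u : ℝ, 0 ≤ g u := by
    intro u; simp only [hg_def]; positivity
  have hgauss_int : Integrable (fun u : ℝ => (Real.sqrt k)⁻¹ * Real.exp (-(2*R*k)) * Real.exp (-R * u ^ 2)) := by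
    exact (integrable_exp_neg_mul_sq hR).const_mul _
  have hg_cont : Continuous g := by
    apply Continuous.mul
    · apply Continuous.div continuous_const
      · exact Real.continuous_sqrt.comp ((continuous_pow 2).add continuous_const)
      · intro u; exact ne_of_gt (Real.sqrt_pos.2 (by positivity))
    · exact Real.continuous_exp.comp
        (((continuous_const.mul (continuous_pow 2)).neg).sub continuous_const)
  have hg_int : Integrable g := by
    apply hgauss_int.mono' hg_cont.aestronglyMeasurable
    filter_upwards with u
    rw [Real.norm_of_nonneg (hg_nonneg u)]
    exact hmaj u
  -- integrability on Ioi 0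
  have hint : IntegrableOn (fun t : ℝ => t⁻¹ * Real.exp (-(R * (1 / t + t * k ^ 2)))) (Set.Ioi 0) := by
    have := (integrableOn_image_iff_integrableOn_abs_deriv_smul measurableSet_Ioi hderiv hinj g).1
      (hg_int.integrableOn)
    apply this.congr_fun _ measurableSet_Ioi
    intro t ht
    simp only [smul_eq_mul]
    exact (hkey t ht)
  refine ⟨hint, ?_⟩
  have heq : (∫ t in Set.Ioi (0:ℝ), t⁻¹ * Real.exp (-(R * (1 / t + t * k ^ 2))))
      = ∫ u in f '' Set.Ioi 0, g u := by
    rw [integral_image_eq_integral_abs_deriv_smul measurableSet_Ioi hderiv hinj g]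
    apply setIntegral_congr_fun measurableSet_Ioi
    intro t ht
    simp only [smul_eq_mul]
    exact (hkey t ht).symm
  rw [heq]
  calc (∫ u in f '' Set.Ioi 0, g u) ≤ ∫ u, g u := by
        apply setIntegral_le_integral hg_int
        filter_upwards with u using hg_nonneg u
    _ ≤ ∫ u, (Real.sqrt k)⁻¹ * Real.exp (-(2*R*k)) * Real.exp (-R * u ^ 2) :=
        integral_mono hg_int hgauss_int hmaj
    _ = (Real.sqrt k)⁻¹ * Real.exp (-(2*R*k)) * Real.sqrt (Real.pi / R) := by
        rw [integral_const_mul, integral_gaussian R]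
    _ = Real.sqrt (Real.pi / (R * k)) * Real.exp (-(2 * R * k)) := by
        rw [show Real.pi / (R * k) = (Real.pi / R) / k by ring,
          Real.sqrt_div (by positivity) k]
        field_simp

/-- The basic ray integral, in the parametrization `z' = −tc`, `t ∈ (0,∞)`. -/
noncomputable def rayIntegral (c z : ℂ) (R : ℝ) : ℂ :=
  ∫ t in Set.Ioi (0 : ℝ),
    (t : ℂ)⁻¹ * ((-(t : ℂ) * c + z) / (-(t : ℂ) * c - z)) *
      Real.exp (-(R * (1 / t + t * ‖c‖ ^ 2)))

open Set in
theorem ray_integral_large_R_estimate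
    (c : ℂ) (hc : c ≠ 0)
    (z : ℂ) (hz : ∀ t : ℝ, 0 < t → z ≠ -(t : ℂ) * c) :
    BddAbove ((fun t : ℝ =>
        ‖(-(t : ℂ) * c + z) / (-(t : ℂ) * c - z)‖) '' Set.Ioi 0) ∧
    (∀ R : ℝ, 0 < R →
      ‖rayIntegral c z R‖
        ≤ sSup ((fun t : ℝ =>
              ‖(-(t : ℂ) * c + z) / (-(t : ℂ) * c - z)‖) '' Set.Ioi 0)
            * Real.sqrt (Real.pi / (R * ‖c‖))
            * Real.exp (-(2 * R * ‖c‖))) ∧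
    Tendsto (fun R : ℝ => rayIntegral c z R) atTop (nhds 0) := by
  have hk : 0 < ‖c‖ := norm_pos_iff.mpr hc
  set k := ‖c‖ with hk_def
  set φ : ℝ → ℝ := fun t : ℝ =>
    ‖(-(t : ℂ) * c + z) / (-(t : ℂ) * c - z)‖ with hφ_def
  -- Part 1: bounded above
  have hbdd : BddAbove (φ '' Set.Ioi 0) := by
    by_cases hz0 : z = 0
    · refine ⟨1, ?_⟩
      rintro x ⟨t, ht, rfl⟩
      have ht' : (0:ℝ) < t := ht
      have hne : -(t:ℂ) * c ≠ 0 := by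
        apply mul_ne_zero _ hc
        simpa using (ne_of_gt (show (0:ℝ) < t from ht'))
      simp only [hφ_def, hz0, add_zero, sub_zero, div_self hne, norm_one, le_refl]
    · set Φ : ℝ → ℝ := fun s : ℝ =>
        ‖(-(s : ℂ) * c + (1 - (s:ℂ)) * z) / (-(s : ℂ) * c - (1 - (s:ℂ)) * z)‖
        with hΦ_def
      have hden : ∀ s ∈ Set.Icc (0:ℝ) 1, -(s : ℂ) * c - (1 - (s:ℂ)) * z ≠ 0 := by
        intro s hs h0
        have heq : (1 - (s:ℂ)) * z = -(s:ℂ) * c := by linear_combination -h0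
        rcases eq_or_lt_of_le hs.1 with h0s | h0s
        · rw [← h0s] at heq; simp at heq; exact hz0 heq
        rcases eq_or_lt_of_le hs.2 with hs1 | hs1
        · rw [hs1] at heq
          push_cast at heq
          simp at heq
          exact hc heq
        · have hs1' : (0:ℝ) < 1 - s := by linarith
          have hcast : ((1:ℂ) - (s:ℂ)) ≠ 0 := by
            have h := Complex.ofReal_ne_zero.mpr (ne_of_gt hs1')
            push_cast at h
            exact h
          apply hz (s / (1 - s)) (by positivity)
          have : z = (-(s:ℂ) * c) / (1 - (s:ℂ)) := by
            field_simp at heq ⊢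
            linear_combination heq
          rw [this]
          push_cast
          field_simp
      have hΦcont : ContinuousOn Φ (Set.Icc 0 1) := by
        apply continuous_norm.comp_continuousOn
        apply ContinuousOn.div
        · fun_prop
        · fun_prop
        · exact hden
      have hsub : φ '' Set.Ioi 0 ⊆ Φ '' Set.Icc 0 1 := by
        rintro x ⟨t, ht, rfl⟩
        have ht' : (0:ℝ) < t := ht
        have h1t : (0:ℝ) < 1 + t := by linarith
        refine ⟨t / (1 + t), ⟨by positivity, by rw [div_le_one h1t]; linarith⟩, ?_⟩
        have h1t' : ((1:ℂ) + (t:ℂ)) ≠ 0 := by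
          have h := Complex.ofReal_ne_zero.mpr (ne_of_gt h1t)
          push_cast at h
          exact h
        simp only [hΦ_def, hφ_def]
        congr 1
        have hcast : ((t / (1 + t) : ℝ) : ℂ) = (t:ℂ) / (1 + (t:ℂ)) := by push_cast; ring
        rw [hcast]
        have hdz : -(t:ℂ) * c - z ≠ 0 := by
          intro h0
          exact hz t ht' (by linear_combination -h0)
        have hdz2 : -((t:ℂ) / (1 + (t:ℂ))) * c - (1 - (t:ℂ) / (1 + (t:ℂ))) * z ≠ 0 := by
          intro h0
          apply hdz
          have : (1 + (t:ℂ)) * (-((t:ℂ) / (1 + (t:ℂ))) * c - (1 - (t:ℂ) / (1 + (t:ℂ))) * z) =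
              -(t:ℂ) * c - z := by
            field_simp
            ring
          rw [h0, mul_zero] at this
          exact this.symm
        rw [div_eq_div_iff hdz2 hdz]
        field_simp
        ring
      exact ((isCompact_Icc.image_of_continuousOn hΦcont).bddAbove).mono hsub
  set M := sSup (φ '' Set.Ioi 0) with hM_def
  have hφM : ∀ t ∈ Set.Ioi (0:ℝ), φ t ≤ M := fun t ht =>
    le_csSup hbdd (Set.mem_image_of_mem φ ht)
  have hM0 : 0 ≤ M := le_trans (norm_nonneg _) (hφM 1 (by norm_num))
  -- Part 2: the estimate
  have hest : ∀ R : ℝ, 0 < R →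
      ‖rayIntegral c z R‖
        ≤ M * Real.sqrt (Real.pi / (R * k)) * Real.exp (-(2 * R * k)) := by
    intro R hR
    obtain ⟨hint, hle⟩ := key_est hk hR
    set h : ℝ → ℝ := fun t => t⁻¹ * Real.exp (-(R * (1 / t + t * k ^ 2))) with hh_def
    set F : ℝ → ℂ := fun t => (t : ℂ)⁻¹ * ((-(t : ℂ) * c + z) / (-(t : ℂ) * c - z)) *
        Real.exp (-(R * (1 / t + t * k ^ 2))) with hF_def
    have hFnorm : ∀ t ∈ Set.Ioi (0:ℝ), ‖F t‖ ≤ M * h t := by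
      intro t ht
      have ht' : (0:ℝ) < t := ht
      have : ‖F t‖ = t⁻¹ * φ t * Real.exp (-(R * (1 / t + t * k ^ 2))) := by
        simp only [hF_def, norm_mul, hφ_def, norm_inv, Complex.norm_real, Real.norm_eq_abs]
        rw [abs_of_pos ht',
          abs_of_pos (Real.exp_pos _)]
      rw [this]
      have h1 : φ t ≤ M := hφM t ht
      have h2 : (0:ℝ) ≤ t⁻¹ := by positivity
      have h3 : (0:ℝ) < Real.exp (-(R * (1 / t + t * k ^ 2))) := Real.exp_pos _
      show _ ≤ M * (t⁻¹ * Real.exp (-(R * (1 / t + t * k ^ 2))))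
      calc t⁻¹ * φ t * Real.exp (-(R * (1 / t + t * k ^ 2)))
          ≤ t⁻¹ * M * Real.exp (-(R * (1 / t + t * k ^ 2))) :=
            mul_le_mul_of_nonneg_right (mul_le_mul_of_nonneg_left h1 h2) h3.le
        _ = M * (t⁻¹ * Real.exp (-(R * (1 / t + t * k ^ 2)))) := by ring
    have hFmeas : AEStronglyMeasurable F (volume.restrict (Set.Ioi 0)) := by
      apply Measurable.aestronglyMeasurable
      fun_prop
    have hMh_int : IntegrableOn (fun t => M * h t) (Set.Ioi 0) := hint.const_mul M
    have hF_int : IntegrableOn F (Set.Ioi 0) := by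
      apply hMh_int.mono' hFmeas
      filter_upwards [ae_restrict_mem measurableSet_Ioi] with t ht
      exact hFnorm t ht
    calc ‖rayIntegral c z R‖ = ‖∫ t in Set.Ioi (0:ℝ), F t‖ := by
          rw [rayIntegral]
      _ ≤ ∫ t in Set.Ioi (0:ℝ), ‖F t‖ := norm_integral_le_integral_norm F
      _ ≤ ∫ t in Set.Ioi (0:ℝ), M * h t := by
          apply setIntegral_mono_on hF_int.norm hMh_int measurableSet_Ioi hFnorm
      _ = M * ∫ t in Set.Ioi (0:ℝ), h t := by rw [integral_const_mul]
      _ ≤ M * (Real.sqrt (Real.pi / (R * k)) * Real.exp (-(2 * R * k))) := by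
          exact mul_le_mul_of_nonneg_left hle hM0
      _ = M * Real.sqrt (Real.pi / (R * k)) * Real.exp (-(2 * R * k)) := by ring
  refine ⟨hbdd, hest, ?_⟩
  -- Part 3: tendsto 0
  have hA : Tendsto (fun R : ℝ => Real.sqrt (Real.pi / (R * k))) atTop (nhds 0) := by
    have h1 : Tendsto (fun R : ℝ => Real.pi / (R * k)) atTop (nhds 0) :=
      Tendsto.div_atTop tendsto_const_nhds (Tendsto.atTop_mul_const hk tendsto_id)
    simpa using h1.sqrt
  have hE : Tendsto (fun R : ℝ => Real.exp (-(2 * R * k))) atTop (nhds 0) := by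
    apply Real.tendsto_exp_atBot.comp
    have h1 : Tendsto (fun R : ℝ => R * (2 * k)) atTop atTop :=
      Tendsto.atTop_mul_const (by positivity) tendsto_id
    have h2 : Tendsto (fun R : ℝ => -(R * (2 * k))) atTop atBot :=
      tendsto_neg_atBot_iff.mpr h1
    exact h2.congr (fun R => by ring)
  have hB : Tendsto (fun R : ℝ => M * Real.sqrt (Real.pi / (R * k))
      * Real.exp (-(2 * R * k))) atTop (nhds 0) := by
    have := ((hA.const_mul M).mul hE)
    simpa [mul_assoc] using this
  apply squeeze_zero_norm' _ hB
  filter_upwards [eventually_gt_atTop (0:ℝ)] with R hR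
  exact hest R hR
end

section
/- Let c ∈ ℂ∖{0}, z ∈ ℂ, R > 0 and 0 < ε < π/2. For r > 0 define A(r) = ∫_{−ε}^{ε} ((−re^{iψ}c + z)/(−re^{iψ}c − z)) · exp(−R(e^{−iψ}/r + re^{iψ}|c|²)) dψ. Then for all sufficiently small r > 0 and all sufficiently large r the integrand is defined (the denominator does not vanish for ψ ∈ [−ε,ε]), and A(r) → 0 both as r → 0⁺ and as r → ∞. -/
/-!
STATEMENT 13: Let `c ∈ ℂ∖{0}`, `z ∈ ℂ`, `R > 0` and `0 < ε < π/2`. For `r > 0`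
let `A(r) = ∫_{−ε}^{ε} ((−re^{iψ}c + z)/(−re^{iψ}c − z))·exp(−R(e^{−iψ}/r +
re^{iψ}|c|²)) dψ` (the integral along a circular arc of radius `r|c|`). Then
for all sufficiently small `r > 0` and all sufficiently large `r` the integrand
is defined (the denominator does not vanish for `ψ ∈ [−ε,ε]`), and `A(r) → 0`
both as `r → 0⁺` and as `r → ∞`.
-/

open MeasureTheory Filter Complex

lemma aux_frac (w z : ℂ) (h : 2 * ‖w‖ ≤ ‖z‖) : ‖(w + z) / (w - z)‖ ≤ 3 := by
  rcases eq_or_ne z 0 with rfl | hz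
  · have h0 : ‖(0 : ℂ)‖ = 0 := norm_zero
    have hw : w = 0 := norm_le_zero_iff.mp (by linarith [norm_nonneg w])
    simp [hw]
  · have hz' : 0 < ‖z‖ := norm_pos_iff.mpr hz
    have h1 : ‖z‖ - ‖w‖ ≤ ‖w - z‖ := by
      have := abs_le.mp (abs_norm_sub_norm_le w z)
      linarith [this.1]
    have hd : ‖z‖ / 2 ≤ ‖w - z‖ := by linarith
    have hn : ‖w + z‖ ≤ 3 / 2 * ‖z‖ := le_trans (norm_add_le _ _) (by linarith)
    rw [norm_div, div_le_iff₀ (by linarith)]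
    nlinarith

lemma aux_frac' (w z : ℂ) (h : 2 * ‖w‖ ≤ ‖z‖ ∨ 2 * ‖z‖ ≤ ‖w‖) :
    ‖(w + z) / (w - z)‖ ≤ 3 := by
  rcases h with h | h
  · exact aux_frac w z h
  · have := aux_frac z w h
    rwa [norm_div, norm_sub_rev, add_comm, ← norm_div] at this

lemma aux_norm_w (r ψ : ℝ) (c : ℂ) (hr : 0 ≤ r) :
    ‖-(r : ℂ) * Complex.exp (Complex.I * ψ) * c‖ = r * ‖c‖ := by
  rw [norm_mul, norm_mul, norm_neg,
    show Complex.I * (ψ : ℂ) = (ψ : ℂ) * Complex.I by ring,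
    Complex.norm_exp_ofReal_mul_I, Complex.norm_real, Real.norm_eq_abs,
    _root_.abs_of_nonneg hr, mul_one]

lemma aux_ne (r ψ : ℝ) (c z : ℂ) (hr : 0 < r) (hne : r * ‖c‖ ≠ ‖z‖) :
    -(r : ℂ) * Complex.exp (Complex.I * ψ) * c - z ≠ 0 := by
  intro h
  exact hne (by rw [← aux_norm_w r ψ c hr.le, sub_eq_zero.mp h])

lemma aux_re (R r ψ a : ℝ) :
    (-(R : ℂ) * (Complex.exp (-Complex.I * ψ) / r +
        r * Complex.exp (Complex.I * ψ) * (a : ℂ) ^ 2)).re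
      = -R * (Real.cos ψ * (1 / r + r * a ^ 2)) := by
  have e1 : Complex.exp (Complex.I * ψ) = (Real.cos ψ : ℂ) + (Real.sin ψ : ℂ) * Complex.I := by
    rw [show Complex.I * ψ = (ψ : ℂ) * Complex.I by ring, Complex.exp_mul_I,
      ← Complex.ofReal_cos, ← Complex.ofReal_sin]
  have e2 : Complex.exp (-Complex.I * ψ) = (Real.cos ψ : ℂ) - (Real.sin ψ : ℂ) * Complex.I := by
    rw [show -Complex.I * ψ = ((-ψ : ℝ) : ℂ) * Complex.I by push_cast; ring,
      Complex.exp_mul_I, ← Complex.ofReal_cos, ← Complex.ofReal_sin,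
      Real.cos_neg, Real.sin_neg]
    push_cast; ring
  have key : -(R : ℂ) * (Complex.exp (-Complex.I * ψ) / r +
        r * Complex.exp (Complex.I * ψ) * (a : ℂ) ^ 2)
      = ((-R * (Real.cos ψ * (1 / r + r * a ^ 2)) : ℝ) : ℂ) +
        ((R * (Real.sin ψ * (1 / r - r * a ^ 2)) : ℝ) : ℂ) * Complex.I := by
    rw [e1, e2]; push_cast; ring
  rw [key]
  simp only [Complex.add_re, Complex.mul_re, Complex.ofReal_re, Complex.ofReal_im,
    Complex.I_re, Complex.I_im]
  ring


/-- The arc integral `A(r)`. -/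
noncomputable def arcIntegral (c z : ℂ) (R ε : ℝ) (r : ℝ) : ℂ :=
  ∫ ψ in (-ε)..ε,
    ((-(r : ℂ) * Complex.exp (Complex.I * ψ) * c + z) /
        (-(r : ℂ) * Complex.exp (Complex.I * ψ) * c - z)) *
      Complex.exp (-(R : ℂ) * (Complex.exp (-Complex.I * ψ) / r +
        r * Complex.exp (Complex.I * ψ) * (‖c‖ : ℂ) ^ 2))

lemma normA_le (c z : ℂ) (R ε r : ℝ) (hR : 0 < R) (hε : 0 < ε) (hε' : ε < Real.pi / 2)
    (hr : 0 < r) (hsep : 2 * (r * ‖c‖) ≤ ‖z‖ ∨ 2 * ‖z‖ ≤ r * ‖c‖) :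
    ‖arcIntegral c z R ε r‖ ≤
      (3 * Real.exp (-(R * Real.cos ε) * (1 / r + r * ‖c‖ ^ 2))) * (2 * ε) := by
  have hεπ : ε ≤ Real.pi := by linarith [Real.pi_pos]
  have key : ∀ ψ ∈ Set.uIoc (-ε) ε,
      ‖((-(r : ℂ) * Complex.exp (Complex.I * ψ) * c + z) /
        (-(r : ℂ) * Complex.exp (Complex.I * ψ) * c - z)) *
      Complex.exp (-(R : ℂ) * (Complex.exp (-Complex.I * ψ) / r +
        r * Complex.exp (Complex.I * ψ) * (‖c‖ : ℂ) ^ 2))‖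
      ≤ 3 * Real.exp (-(R * Real.cos ε) * (1 / r + r * ‖c‖ ^ 2)) := by
    intro ψ hψ
    rw [Set.uIoc_of_le (by linarith : -ε ≤ ε)] at hψ
    have hψabs : |ψ| ≤ ε := abs_le.mpr ⟨hψ.1.le, hψ.2⟩
    have hcos : Real.cos ε ≤ Real.cos ψ := by
      rw [← Real.cos_abs ψ]
      exact Real.cos_le_cos_of_nonneg_of_le_pi (abs_nonneg ψ) hεπ hψabs
    rw [norm_mul]
    have hfrac : ‖(-(r : ℂ) * Complex.exp (Complex.I * ψ) * c + z) /
        (-(r : ℂ) * Complex.exp (Complex.I * ψ) * c - z)‖ ≤ 3 := by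
      apply aux_frac'
      rw [aux_norm_w r ψ c hr.le]
      exact hsep
    have hexp : ‖Complex.exp (-(R : ℂ) * (Complex.exp (-Complex.I * ψ) / r +
        r * Complex.exp (Complex.I * ψ) * (‖c‖ : ℂ) ^ 2))‖
        ≤ Real.exp (-(R * Real.cos ε) * (1 / r + r * ‖c‖ ^ 2)) := by
      rw [Complex.norm_exp, aux_re]
      apply Real.exp_le_exp.mpr
      have h1 : 0 ≤ 1 / r + r * ‖c‖ ^ 2 := by positivity
      nlinarith [mul_le_mul_of_nonneg_right hcos h1, hR.le]
    exact mul_le_mul hfrac hexp (norm_nonneg _) (by norm_num)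
  have := intervalIntegral.norm_integral_le_of_norm_le_const key
  rw [show |ε - (-ε)| = 2 * ε by rw [abs_of_pos (by linarith)]; ring] at this
  exact this

theorem arc_integral_vanishes
    (c : ℂ) (hc : c ≠ 0) (z : ℂ) (R : ℝ) (hR : 0 < R)
    (ε : ℝ) (hε : 0 < ε) (hε' : ε < Real.pi / 2) :
    (∀ᶠ r : ℝ in nhdsWithin 0 (Set.Ioi 0), ∀ ψ ∈ Set.Icc (-ε) ε,
      -(r : ℂ) * Complex.exp (Complex.I * ψ) * c - z ≠ 0) ∧
    (∀ᶠ r : ℝ in atTop, ∀ ψ ∈ Set.Icc (-ε) ε,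
      -(r : ℂ) * Complex.exp (Complex.I * ψ) * c - z ≠ 0) ∧
    Tendsto (arcIntegral c z R ε) (nhdsWithin 0 (Set.Ioi 0)) (nhds 0) ∧
    Tendsto (arcIntegral c z R ε) atTop (nhds 0) := by
  have hc' : 0 < ‖c‖ := norm_pos_iff.mpr hc
  have habs : 0 < ‖c‖ := norm_pos_iff.mpr hc
  have hcos : 0 < Real.cos ε := Real.cos_pos_of_mem_Ioo ⟨by linarith [Real.pi_pos], hε'⟩
  -- small-r eventual conditions
  have hsmall : ∀ᶠ r : ℝ in nhdsWithin 0 (Set.Ioi 0),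
      0 < r ∧ (2 * (r * ‖c‖) ≤ ‖z‖ ∨ 2 * ‖z‖ ≤ r * ‖c‖) ∧ r * ‖c‖ ≠ ‖z‖ := by
    rcases eq_or_ne z 0 with rfl | hz
    · filter_upwards [self_mem_nhdsWithin] with r hr
      have hr : 0 < r := hr
      exact ⟨hr, Or.inr (by rw [norm_zero, mul_zero]; positivity), by
        rw [norm_zero]; exact (mul_pos hr hc').ne'⟩
    · have hz' : 0 < ‖z‖ := norm_pos_iff.mpr hz
      have hδ : 0 < ‖z‖ / (2 * ‖c‖) := by positivity
      filter_upwards [Ioo_mem_nhdsGT_of_mem (Set.mem_Ico.mpr ⟨le_refl (0:ℝ), hδ⟩)]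
        with r hr
      obtain ⟨hr0, hrδ⟩ := hr
      have h2 : 2 * (r * ‖c‖) < ‖z‖ := by
        have := (lt_div_iff₀ (by positivity : (0:ℝ) < 2 * ‖c‖)).mp hrδ
        linarith
      refine ⟨hr0, Or.inl h2.le, ne_of_lt ?_⟩
      nlinarith [mul_pos hr0 hc']
  -- large-r eventual conditions
  have hlarge : ∀ᶠ r : ℝ in atTop,
      0 < r ∧ (2 * (r * ‖c‖) ≤ ‖z‖ ∨ 2 * ‖z‖ ≤ r * ‖c‖) ∧ r * ‖c‖ ≠ ‖z‖ := by
    filter_upwards [eventually_ge_atTop ((2 * ‖z‖ + 1) / ‖c‖), eventually_gt_atTop 0]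
      with r hr hr0
    have h1 : 2 * ‖z‖ + 1 ≤ r * ‖c‖ := (div_le_iff₀ hc').mp hr
    refine ⟨hr0, Or.inr (by linarith), ?_⟩
    have : ‖z‖ < r * ‖c‖ := by linarith [norm_nonneg z]
    exact this.ne'
  refine ⟨?_, ?_, ?_, ?_⟩
  · filter_upwards [hsmall] with r hr ψ _
    exact aux_ne r ψ c z hr.1 hr.2.2
  · filter_upwards [hlarge] with r hr ψ _
    exact aux_ne r ψ c z hr.1 hr.2.2
  · rw [tendsto_zero_iff_norm_tendsto_zero]
    apply squeeze_zero' (Eventually.of_forall fun r => norm_nonneg _)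
      (g := fun r => (3 * Real.exp (-(R * Real.cos ε) * (1 / r))) * (2 * ε))
    · filter_upwards [hsmall] with r hr
      refine le_trans (normA_le c z R ε r hR hε hε' hr.1 hr.2.1) ?_
      have hy : 0 ≤ (R * Real.cos ε) * (r * ‖c‖ ^ 2) :=
        mul_nonneg (mul_pos hR hcos).le (mul_nonneg hr.1.le (sq_nonneg _))
      have hAB : -(R * Real.cos ε) * (1 / r + r * ‖c‖ ^ 2)
          ≤ -(R * Real.cos ε) * (1 / r) := by nlinarith [hy]
      exact mul_le_mul_of_nonneg_right
        (mul_le_mul_of_nonneg_left (Real.exp_le_exp.mpr hAB) (by norm_num))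
        (by linarith)
    · have h1 : Tendsto (fun r : ℝ => -(R * Real.cos ε) * (1 / r))
          (nhdsWithin 0 (Set.Ioi 0)) atBot := by
        have h0 : Tendsto (fun r : ℝ => r⁻¹) (nhdsWithin 0 (Set.Ioi 0)) atTop :=
          tendsto_inv_nhdsGT_zero
        simpa [one_div] using
          Tendsto.const_mul_atTop_of_neg (neg_lt_zero.mpr (mul_pos hR hcos)) h0
      have h2 := Real.tendsto_exp_atBot.comp h1
      have h3 := (h2.const_mul (3:ℝ)).mul_const (2 * ε)
      simpa using h3
  · rw [tendsto_zero_iff_norm_tendsto_zero]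
    apply squeeze_zero' (Eventually.of_forall fun r => norm_nonneg _)
      (g := fun r => (3 * Real.exp ((-(R * Real.cos ε * ‖c‖ ^ 2)) * r)) * (2 * ε))
    · filter_upwards [hlarge] with r hr
      refine le_trans (normA_le c z R ε r hR hε hε' hr.1 hr.2.1) ?_
      have hy : 0 ≤ (R * Real.cos ε) * (1 / r) :=
        mul_nonneg (mul_pos hR hcos).le (one_div_nonneg.mpr hr.1.le)
      have hAB : -(R * Real.cos ε) * (1 / r + r * ‖c‖ ^ 2)
          ≤ (-(R * Real.cos ε * ‖c‖ ^ 2)) * r := by nlinarith [hy]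
      exact mul_le_mul_of_nonneg_right
        (mul_le_mul_of_nonneg_left (Real.exp_le_exp.mpr hAB) (by norm_num))
        (by linarith)
    · have h1 : Tendsto (fun r : ℝ => (-(R * Real.cos ε * ‖c‖ ^ 2)) * r)
          atTop atBot :=
        Tendsto.const_mul_atTop_of_neg
          (neg_lt_zero.mpr (mul_pos (mul_pos hR hcos) (pow_pos habs 2))) tendsto_id
      have h2 := Real.tendsto_exp_atBot.comp h1
      have h3 := (h2.const_mul (3:ℝ)).mul_const (2 * ε)
      simpa using h3
end

section
/- Let a ∈ ℂ∖{0} and let θ₀ be an argument of −a. For an angle θ with |θ − θ₀| < π/2 and a point w ∈ ℂ∖{0} whose argument is distinct from θ, the integral I(θ) = (1/(4πi)) ∫₀^∞ (dt/t) · ((te^{iθ} + w)/(te^{iθ} − w)) · exp(a e^{−iθ}/t + ā e^{iθ} t) converges absolutely. Moreover, if θ₂ < θ₁ both lie in (θ₀ − π/2, θ₀ + π/2), and w = ρe^{iφ} with ρ > 0 and θ₂ < φ < θ₁, then I(θ₂) − I(θ₁) = exp(a/w + ā·w). -/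
/-!
STATEMENT 14: Let `a ∈ ℂ∖{0}` with argument `θ₀` of `−a`. For `θ` with
`|θ − θ₀| < π/2` and `w ∈ ℂ∖{0}` off the ray of angle `θ`, the integral
`I(θ) = (1/(4πi)) ∫₀^∞ (dt/t)·((te^{iθ} + w)/(te^{iθ} − w))·exp(ae^{−iθ}/t + āe^{iθ}t)`
converges absolutely. Moreover if `θ₂ < θ₁` both lie in `(θ₀ − π/2, θ₀ + π/2)`
and `w = ρe^{iφ}` with `ρ > 0`, `θ₂ < φ < θ₁`, then
`I(θ₂) − I(θ₁) = exp(a/w + ā·w)`.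
-/

open MeasureTheory Complex

/-- The integrand of the canonical ray integral. -/
noncomputable def rayIntegrand (a w : ℂ) (θ : ℝ) (t : ℝ) : ℂ :=
  (t : ℂ)⁻¹ *
    (((t : ℂ) * Complex.exp (Complex.I * θ) + w) /
      ((t : ℂ) * Complex.exp (Complex.I * θ) - w)) *
    Complex.exp (a * Complex.exp (-Complex.I * θ) / t +
      (starRingEnd ℂ) a * Complex.exp (Complex.I * θ) * t)

/-- The canonical ray integral `I(θ)`. -/
noncomputable def rayI (a w : ℂ) (θ : ℝ) : ℂ :=
  (1 / (4 * Real.pi * Complex.I)) * ∫ t in Set.Ioi (0 : ℝ), rayIntegrand a w θ t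

set_option maxHeartbeats 1000000

open Set intervalIntegral Filter Topology

namespace RayProof

/-- kernel fraction bound, large `z`. -/
lemma frac_big {w z : ℂ} (hz : 2 * ‖w‖ ≤ ‖z‖) (h0 : z ≠ 0) :
    ‖(z + w) / (z - w)‖ ≤ 3 := by
  have hzpos : 0 < ‖z‖ := norm_pos_iff.2 h0
  have hden : ‖z‖ / 2 ≤ ‖z - w‖ := by
    have := norm_sub_norm_le z w
    linarith
  have hnum : ‖z + w‖ ≤ 3 / 2 * ‖z‖ := by
    have := norm_add_le z w
    linarith
  rw [norm_div, div_le_iff₀ (by linarith)]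
  nlinarith

/-- kernel fraction bound, small `z`. -/
lemma frac_small {w z : ℂ} (hw0 : w ≠ 0) (hz : ‖z‖ ≤ ‖w‖ / 2) :
    ‖(z + w) / (z - w)‖ ≤ 3 := by
  have hwpos : 0 < ‖w‖ := norm_pos_iff.2 hw0
  have hden : ‖w‖ / 2 ≤ ‖z - w‖ := by
    have h1 : ‖w‖ - ‖z‖ ≤ ‖w - z‖ := norm_sub_norm_le w z
    rw [norm_sub_rev]
    linarith
  have hnum : ‖z + w‖ ≤ 3 / 2 * ‖w‖ := by
    have := norm_add_le z w
    linarith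
  rw [norm_div, div_le_iff₀ (by linarith)]
  nlinarith

/-- the function in the log-variable plane. -/
noncomputable def Hf (a w : ℂ) (s : ℂ) : ℂ :=
  ((Complex.exp s + w) * Complex.exp (a * Complex.exp (-s) + (starRingEnd ℂ) a * Complex.exp s)) /
    (Complex.exp s - w)

lemma exp_ray (u θ : ℝ) : ((Real.exp u : ℝ) : ℂ) * Complex.exp (I * θ) = Complex.exp (u + θ * I) := by
  rw [Complex.ofReal_exp, ← Complex.exp_add]
  congr 1
  ring

lemma Hf_eq_smul (a w : ℂ) (θ u : ℝ) :
    Real.exp u • rayIntegrand a w θ (Real.exp u) = Hf a w ((u : ℂ) + θ * I) := by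
  have ht0 : ((Real.exp u : ℝ) : ℂ) ≠ 0 := by
    simp [Real.exp_ne_zero]
  have hinv : ((Real.exp u : ℝ) : ℂ)⁻¹ = Complex.exp (-((u:ℂ) + θ * I)) * Complex.exp (θ * I) := by
    rw [Complex.ofReal_exp, ← Complex.exp_add, ← Complex.exp_neg]
    congr 1
    ring
  have h1 : a * Complex.exp (-I * θ) / (Real.exp u : ℝ) = a * Complex.exp (-((u:ℂ) + θ * I)) := by
    rw [div_eq_mul_inv, mul_assoc, hinv]
    congr 1
    rw [← Complex.exp_add, ← Complex.exp_add]
    congr 1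
    ring
  have h2 : (starRingEnd ℂ) a * Complex.exp (I * θ) * (Real.exp u : ℝ) =
      (starRingEnd ℂ) a * Complex.exp ((u:ℂ) + θ * I) := by
    rw [mul_assoc, mul_comm (Complex.exp (I * ↑θ)) _, ← mul_assoc, Complex.ofReal_exp,
      mul_assoc, ← Complex.exp_add]
    congr 2
    ring
  rw [rayIntegrand, Complex.real_smul, h1, h2]
  simp only [exp_ray]
  rw [Hf, ← mul_assoc, ← mul_assoc, mul_inv_cancel₀ ht0, one_mul, div_mul_eq_mul_div]

/-- norm of the exponential factor. -/
lemma exp_term_norm {a : ℂ} {θ₀ : ℝ}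
    (h₀ : -a = ((‖a‖ : ℝ) : ℂ) * Complex.exp (Complex.I * θ₀)) (s : ℂ) :
    ‖Complex.exp (a * Complex.exp (-s) + (starRingEnd ℂ) a * Complex.exp s)‖ =
      Real.exp (-(‖a‖ * Real.cos (s.im - θ₀) *
        (Real.exp s.re + Real.exp (-s.re)))) := by
  set A := ‖a‖ with hA
  have ha : a = -((A : ℂ) * Complex.exp (I * θ₀)) := by linear_combination -h₀
  have hconj : (starRingEnd ℂ) a = -((A : ℂ) * Complex.exp (-(I * θ₀))) := by
    rw [ha]
    simp only [map_neg, map_mul, Complex.conj_ofReal, ← Complex.exp_conj, map_mul, Complex.conj_I,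
      Complex.conj_ofReal]
    ring_nf
  rw [Complex.norm_exp]
  congr 1
  rw [hconj, ha]
  have e1 : -((A : ℂ) * Complex.exp (I * θ₀)) * Complex.exp (-s) =
      -((A : ℂ) * Complex.exp (I * θ₀ + -s)) := by
    rw [Complex.exp_add]; ring
  have e2 : -((A : ℂ) * Complex.exp (-(I * θ₀))) * Complex.exp s =
      -((A : ℂ) * Complex.exp (s + -(I * θ₀))) := by
    rw [Complex.exp_add]; ring
  rw [e1, e2]
  have hre1 : (I * (θ₀:ℂ) + -s).re = -s.re := by simp
  have him1 : (I * (θ₀:ℂ) + -s).im = θ₀ - s.im := by simp [sub_eq_add_neg]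
  have hre2 : (s + -(I * (θ₀:ℂ))).re = s.re := by simp
  have him2 : (s + -(I * (θ₀:ℂ))).im = s.im - θ₀ := by simp [sub_eq_add_neg]
  rw [Complex.add_re, Complex.neg_re, Complex.neg_re, Complex.re_ofReal_mul,
    Complex.re_ofReal_mul, Complex.exp_re, Complex.exp_re, hre1, him1, hre2, him2,
    Real.cos_sub, Real.cos_sub]
  ring

lemma cos_lower {θ₀ θ₂ θ₁ y : ℝ} (h2 : θ₀ - Real.pi/2 < θ₂) (h1 : θ₁ < θ₀ + Real.pi/2)
    (hy2 : θ₂ ≤ y) (hy1 : y ≤ θ₁) :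
    min (Real.cos (θ₂ - θ₀)) (Real.cos (θ₁ - θ₀)) ≤ Real.cos (y - θ₀) := by
  have hpi := Real.pi_pos
  rcases le_total (y - θ₀) 0 with h | h
  · refine le_trans (min_le_left _ _) ?_
    rw [show y - θ₀ = -(θ₀ - y) by ring, Real.cos_neg,
      show θ₂ - θ₀ = -(θ₀ - θ₂) by ring, Real.cos_neg]
    exact Real.cos_le_cos_of_nonneg_of_le_pi (by linarith) (by linarith) (by linarith)
  · refine le_trans (min_le_right _ _) ?_
    exact Real.cos_le_cos_of_nonneg_of_le_pi (by linarith) (by linarith) (by linarith)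

lemma cos_lower_pos {θ₀ θ₂ θ₁ : ℝ} (h2 : θ₀ - Real.pi/2 < θ₂) (h21 : θ₂ ≤ θ₁)
    (h1 : θ₁ < θ₀ + Real.pi/2) :
    0 < min (Real.cos (θ₂ - θ₀)) (Real.cos (θ₁ - θ₀)) := by
  refine lt_min ?_ ?_ <;>
    exact Real.cos_pos_of_mem_Ioo ⟨by simp; linarith, by linarith⟩

lemma integrable_exp_neg_abs {c : ℝ} (hc : 0 < c) :
    Integrable (fun u : ℝ => Real.exp (-(c * |u|))) := by
  have h1 : IntegrableOn (fun u : ℝ => Real.exp (-(c * |u|))) (Ioi 0) := by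
    refine (exp_neg_integrableOn_Ioi 0 hc).congr_fun (fun x hx => ?_) measurableSet_Ioi
    rw [abs_of_pos hx]
    ring_nf
  have h2 : IntegrableOn (fun u : ℝ => Real.exp (-(c * |u|))) (Iio 0) := by
    have himg : (fun x : ℝ => -x) '' (Ioi 0) = Iio 0 := by
      ext x
      constructor
      · rintro ⟨y, hy, rfl⟩
        simpa using hy
      · intro hx
        exact ⟨-x, by simpa using hx, by ring⟩
    have := integrableOn_image_iff_integrableOn_abs_deriv_smul (s := Ioi (0:ℝ))
      (f := fun x => -x) (f' := fun _ => -1) measurableSet_Ioi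
      (fun x _ => (hasDerivAt_neg x).hasDerivWithinAt) (neg_injective.injOn)
      (fun u : ℝ => Real.exp (-(c * |u|)))
    rw [himg] at this
    rw [this]
    refine h1.congr_fun (fun x hx => ?_) measurableSet_Ioi
    simp [abs_neg]
  have : IntegrableOn (fun u : ℝ => Real.exp (-(c * |u|))) (Iio 0 ∪ Ici 0) := by
    refine h2.union ?_
    rw [integrableOn_Ici_iff_integrableOn_Ioi]
    exact h1
  rwa [Iio_union_Ici, integrableOn_univ] at this

lemma ray_frac_bound {θ : ℝ} {w : ℂ}
    (hw : ∀ t : ℝ, 0 < t → w ≠ (t : ℂ) * Complex.exp (I * θ)) :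
    ∃ Mf : ℝ, 0 < Mf ∧ ∀ t : ℝ, 0 < t →
      ‖((t : ℂ) * Complex.exp (I * θ) + w) / ((t : ℂ) * Complex.exp (I * θ) - w)‖ ≤ Mf := by
  have hnorm : ∀ t : ℝ, 0 ≤ t → ‖(t : ℂ) * Complex.exp (I * θ)‖ = t := by
    intro t ht
    rw [norm_mul, Complex.norm_real, Real.norm_eq_abs,
      Complex.norm_exp, _root_.abs_of_nonneg ht]
    simp
  by_cases hw0 : w = 0
  · refine ⟨1, one_pos, fun t ht => ?_⟩
    have hz : (t : ℂ) * Complex.exp (I * θ) ≠ 0 := by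
      simp [Complex.exp_ne_zero, ne_of_gt ht]
    subst hw0
    rw [add_zero, sub_zero, div_self hz, norm_one]
  · set g : ℝ → ℝ := fun t => ‖(t : ℂ) * Complex.exp (I * θ) - w‖ with hg
    have hgc : ContinuousOn g (Icc 0 (2 * ‖w‖)) := by
      apply Continuous.continuousOn
      fun_prop
    have hne : (Icc (0:ℝ) (2 * ‖w‖)).Nonempty := ⟨0, by constructor <;> positivity⟩
    obtain ⟨t₀, ht₀mem, ht₀min⟩ := isCompact_Icc.exists_isMinOn hne hgc
    have hδ : 0 < g t₀ := by
      rcases eq_or_lt_of_le ht₀mem.1 with h | h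
      · have : g t₀ = ‖w‖ := by rw [hg]; simp [← h]
        rw [this]
        exact norm_pos_iff.2 hw0
      · rw [hg]
        simp only [norm_pos_iff]
        rw [sub_ne_zero]
        exact fun hh => hw t₀ h (hh.symm)
    refine ⟨max 3 (3 * ‖w‖ / g t₀), lt_of_lt_of_le (by norm_num) (le_max_left _ _),
      fun t ht => ?_⟩
    by_cases hts : t ≤ 2 * ‖w‖
    · refine le_trans ?_ (le_max_right _ _)
      have hmin : g t₀ ≤ g t := ht₀min ⟨le_of_lt ht, hts⟩
      have hnum : ‖(t : ℂ) * Complex.exp (I * θ) + w‖ ≤ 3 * ‖w‖ := by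
        refine le_trans (norm_add_le _ _) ?_
        rw [hnorm t (le_of_lt ht)]
        linarith
      rw [norm_div]
      exact div_le_div₀ (by positivity) hnum hδ hmin
    · refine le_trans ?_ (le_max_left _ _)
      refine frac_big ?_ ?_
      · rw [hnorm t (le_of_lt ht)]; linarith
      · simp [Complex.exp_ne_zero, ne_of_gt ht]

lemma Hf_diff {a w : ℂ} {s : ℂ} (hs : Complex.exp s ≠ w) : DifferentiableAt ℂ (Hf a w) s := by
  have h1 : DifferentiableAt ℂ
      (fun s : ℂ => (Complex.exp s + w) *
        Complex.exp (a * Complex.exp (-s) + (starRingEnd ℂ) a * Complex.exp s)) s := by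
    fun_prop
  have h2 : DifferentiableAt ℂ (fun s : ℂ => Complex.exp s - w) s := by fun_prop
  exact h1.div h2 (sub_ne_zero.2 hs)

lemma one_add_abs_le (u : ℝ) : 1 + |u| ≤ Real.exp u + Real.exp (-u) := by
  rcases le_total 0 u with h | h
  · rw [_root_.abs_of_nonneg h]
    have h1 := Real.add_one_le_exp u
    have h2 := Real.exp_pos (-u)
    linarith
  · rw [abs_of_nonpos h]
    have h1 := Real.add_one_le_exp (-u)
    have h2 := Real.exp_pos u
    linarith

lemma lineIntegrable {a : ℂ} {θ₀ : ℝ} (ha : a ≠ 0)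
    (h₀ : -a = ((‖a‖ : ℝ) : ℂ) * Complex.exp (Complex.I * θ₀)) {θ : ℝ} {w : ℂ}
    (hθ : |θ - θ₀| < Real.pi / 2)
    (hw : ∀ t : ℝ, 0 < t → w ≠ (t : ℂ) * Complex.exp (I * θ)) :
    Integrable (fun u : ℝ => Hf a w ((u : ℂ) + θ * I)) := by
  have hA : 0 < ‖a‖ := norm_pos_iff.mpr ha
  have hθ' := abs_lt.mp hθ
  have hcos : 0 < Real.cos (θ - θ₀) :=
    Real.cos_pos_of_mem_Ioo ⟨by linarith [hθ'.1], hθ'.2⟩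
  set c := ‖a‖ * Real.cos (θ - θ₀) with hcdef
  have hc : 0 < c := mul_pos hA hcos
  obtain ⟨Mf, hMf0, hMfb⟩ := ray_frac_bound hw
  have hnepole : ∀ u : ℝ, Complex.exp ((u : ℂ) + θ * I) ≠ w := by
    intro u h
    rw [← exp_ray] at h
    exact hw (Real.exp u) (Real.exp_pos u) h.symm
  have hcont : Continuous (fun u : ℝ => Hf a w ((u : ℂ) + θ * I)) := by
    rw [continuous_iff_continuousAt]
    intro u
    exact ContinuousAt.comp (x := u) (g := Hf a w) (Hf_diff (hnepole u)).continuousAt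
      (by fun_prop)
  refine ((integrable_exp_neg_abs hc).const_mul (Mf * Real.exp (-c))).mono'
    hcont.aestronglyMeasurable (ae_of_all _ fun u => ?_)
  have hsre : ((u : ℂ) + θ * I).re = u := by simp
  have hsim : ((u : ℂ) + θ * I).im = θ := by simp
  have hE := exp_term_norm h₀ ((u : ℂ) + θ * I)
  rw [hsre, hsim] at hE
  rw [Hf, mul_div_right_comm, norm_mul, hE]
  have hfrac : ‖(Complex.exp ((u:ℂ) + θ * I) + w) / (Complex.exp ((u:ℂ) + θ * I) - w)‖ ≤ Mf := by
    rw [← exp_ray]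
    exact hMfb (Real.exp u) (Real.exp_pos u)
  have hexp : Real.exp (-(‖a‖ * Real.cos (θ - θ₀) * (Real.exp u + Real.exp (-u)))) ≤
      Real.exp (-c) * Real.exp (-(c * |u|)) := by
    rw [← Real.exp_add, Real.exp_le_exp]
    have hkey := one_add_abs_le u
    have := mul_le_mul_of_nonneg_left hkey (le_of_lt hc)
    rw [hcdef]
    nlinarith
  calc ‖(Complex.exp ((u:ℂ) + θ * I) + w) / (Complex.exp ((u:ℂ) + θ * I) - w)‖ *
        Real.exp (-(‖a‖ * Real.cos (θ - θ₀) * (Real.exp u + Real.exp (-u))))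
      ≤ Mf * (Real.exp (-c) * Real.exp (-(c * |u|))) := by
        exact mul_le_mul hfrac hexp (le_of_lt (Real.exp_pos _)) (le_of_lt hMf0)
    _ = Mf * Real.exp (-c) * Real.exp (-(c * |u|)) := by ring

lemma partA {a : ℂ} {θ₀ : ℝ} (ha : a ≠ 0)
    (h₀ : -a = ((‖a‖ : ℝ) : ℂ) * Complex.exp (Complex.I * θ₀)) {θ : ℝ} {w : ℂ}
    (hθ : |θ - θ₀| < Real.pi / 2)
    (hw : ∀ t : ℝ, 0 < t → w ≠ (t : ℂ) * Complex.exp (Complex.I * θ)) :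
    IntegrableOn (rayIntegrand a w θ) (Ioi 0) := by
  have himg : Real.exp '' univ = Ioi 0 := by rw [image_univ, Real.range_exp]
  have hiff := integrableOn_image_iff_integrableOn_abs_deriv_smul (s := univ)
    (f := Real.exp) (f' := Real.exp) MeasurableSet.univ
    (fun x _ => (Real.hasDerivAt_exp x).hasDerivWithinAt) Real.exp_injective.injOn
    (rayIntegrand a w θ)
  rw [himg] at hiff
  rw [hiff, integrableOn_univ]
  exact (lineIntegrable ha h₀ hθ hw).congr (ae_of_all _ fun u => by
    simp only []
    rw [← Hf_eq_smul, _root_.abs_of_pos (Real.exp_pos u)])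

lemma cov {a : ℂ} (w : ℂ) (θ : ℝ) :
    ∫ t in Ioi (0:ℝ), rayIntegrand a w θ t = ∫ x : ℝ, Hf a w ((x : ℂ) + θ * I) := by
  have himg : Real.exp '' univ = Ioi 0 := by rw [image_univ, Real.range_exp]
  rw [← himg, integral_image_eq_integral_abs_deriv_smul MeasurableSet.univ
    (fun x _ => (Real.hasDerivAt_exp x).hasDerivWithinAt) Real.exp_injective.injOn]
  rw [setIntegral_univ]
  congr 1
  funext x
  rw [_root_.abs_of_pos (Real.exp_pos x), Hf_eq_smul]

/-- boundary integral of a rectangle, counterclockwise. -/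
noncomputable def RB (f : ℂ → ℂ) (a b c d : ℝ) : ℂ :=
  ((∫ x : ℝ in a..b, f (x + c * I)) - ∫ x : ℝ in a..b, f (x + d * I)) +
    I • (∫ y : ℝ in c..d, f (b + y * I)) - I • ∫ y : ℝ in c..d, f (a + y * I)

lemma RB_eq_zero {f : ℂ → ℂ} {a b c d : ℝ} (hab : a ≤ b) (hcd : c ≤ d)
    (hd : ∀ s : ℂ, s.re ∈ Icc a b → s.im ∈ Icc c d → DifferentiableAt ℂ f s) :
    RB f a b c d = 0 := by
  have h := Complex.integral_boundary_rect_eq_zero_of_differentiable_on_off_countable f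
    ⟨a, c⟩ ⟨b, d⟩ ∅ countable_empty ?_ ?_
  · simpa [RB] using h
  · intro s hs
    rw [Complex.mem_reProdIm] at hs
    exact (hd s (by simpa [uIcc_of_le hab] using hs.1)
      (by simpa [uIcc_of_le hcd] using hs.2)).continuousAt.continuousWithinAt
  · rintro s ⟨hs, -⟩
    rw [Complex.mem_reProdIm] at hs
    have h1 : s.re ∈ Ioo a b := by
      simpa [min_eq_left hab, max_eq_right hab] using hs.1
    have h2 : s.im ∈ Ioo c d := by
      simpa [min_eq_left hcd, max_eq_right hcd] using hs.2
    exact hd s (Ioo_subset_Icc_self h1) (Ioo_subset_Icc_self h2)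

lemma RB_hsplit {f : ℂ → ℂ} {a m b c d : ℝ}
    (h1 : IntervalIntegrable (fun x : ℝ => f (x + c * I)) volume a m)
    (h2 : IntervalIntegrable (fun x : ℝ => f (x + c * I)) volume m b)
    (h3 : IntervalIntegrable (fun x : ℝ => f (x + d * I)) volume a m)
    (h4 : IntervalIntegrable (fun x : ℝ => f (x + d * I)) volume m b) :
    RB f a b c d = RB f a m c d + RB f m b c d := by
  unfold RB
  rw [← integral_add_adjacent_intervals h1 h2, ← integral_add_adjacent_intervals h3 h4]
  simp only [smul_eq_mul]
  ring

lemma RB_vsplit {f : ℂ → ℂ} {a b c k d : ℝ}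
    (h1 : IntervalIntegrable (fun y : ℝ => f (a + y * I)) volume c k)
    (h2 : IntervalIntegrable (fun y : ℝ => f (a + y * I)) volume k d)
    (h3 : IntervalIntegrable (fun y : ℝ => f (b + y * I)) volume c k)
    (h4 : IntervalIntegrable (fun y : ℝ => f (b + y * I)) volume k d) :
    RB f a b c d = RB f a b c k + RB f a b k d := by
  unfold RB
  rw [← integral_add_adjacent_intervals h1 h2, ← integral_add_adjacent_intervals h3 h4]
  simp only [smul_eq_mul]
  ring

lemma RB_add {f g : ℂ → ℂ} {a b c d : ℝ}
    (h1 : IntervalIntegrable (fun x : ℝ => f (x + c * I)) volume a b)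
    (h2 : IntervalIntegrable (fun x : ℝ => f (x + d * I)) volume a b)
    (h3 : IntervalIntegrable (fun y : ℝ => f (b + y * I)) volume c d)
    (h4 : IntervalIntegrable (fun y : ℝ => f (a + y * I)) volume c d)
    (h5 : IntervalIntegrable (fun x : ℝ => g (x + c * I)) volume a b)
    (h6 : IntervalIntegrable (fun x : ℝ => g (x + d * I)) volume a b)
    (h7 : IntervalIntegrable (fun y : ℝ => g (b + y * I)) volume c d)
    (h8 : IntervalIntegrable (fun y : ℝ => g (a + y * I)) volume c d) :
    RB (fun s => f s + g s) a b c d = RB f a b c d + RB g a b c d := by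
  unfold RB
  rw [integral_add h1 h5, integral_add h2 h6, integral_add h3 h7, integral_add h4 h8]
  simp only [smul_eq_mul]
  ring

lemma integral_horiz_inv {z₀ : ℂ} {x₁ x₂ y : ℝ} (hy : y ≠ z₀.im) :
    ∫ x : ℝ in x₁..x₂, ((x : ℂ) + y * I - z₀)⁻¹ =
      Complex.log ((x₂ : ℂ) + y * I - z₀) - Complex.log ((x₁ : ℂ) + y * I - z₀) := by
  have him : ∀ x : ℝ, ((x : ℂ) + y * I - z₀).im = y - z₀.im := by intro x; simp
  have hne : ∀ x : ℝ, ((x : ℂ) + y * I - z₀) ≠ 0 := by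
    intro x h
    apply sub_ne_zero.2 hy
    rw [← him x, h]
    simp
  refine integral_eq_sub_of_hasDerivAt
      (f := fun x : ℝ => Complex.log ((x : ℂ) + (y : ℂ) * I - z₀)) ?_ ?_
  · intro x hx
    have hsp : ((x : ℂ) + y * I - z₀) ∈ Complex.slitPlane :=
      Or.inr (by rw [him x]; exact sub_ne_zero.2 hy)
    have hin : HasDerivAt (fun z : ℂ => z + (y * I - z₀)) 1 x := by
      simpa using (hasDerivAt_id ((x : ℝ) : ℂ)).add_const ((y : ℂ) * I - z₀)
    have harg : ∀ u : ℂ, u + ((y : ℂ) * I - z₀) = u + (y : ℂ) * I - z₀ := fun u => by ring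
    have hsp' : ((x : ℂ) + ((y : ℂ) * I - z₀)) ∈ Complex.slitPlane := by rw [harg]; exact hsp
    have hlog0 := (Complex.hasDerivAt_log hsp').comp ((x : ℝ) : ℂ) hin
    have h2 := hlog0.comp_ofReal
    simp only [Function.comp_def, mul_one, harg] at h2
    exact h2
  · apply ContinuousOn.intervalIntegrable
    refine ContinuousOn.inv₀ (by fun_prop) fun x _ => hne x

lemma integral_vert_inv_right {z₀ : ℂ} {y₁ y₂ x : ℝ} (hx : z₀.re < x) :
    ∫ y : ℝ in y₁..y₂, ((x : ℂ) + y * I - z₀)⁻¹ * I =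
      Complex.log ((x : ℂ) + y₂ * I - z₀) - Complex.log ((x : ℂ) + y₁ * I - z₀) := by
  have hre : ∀ y : ℝ, ((x : ℂ) + y * I - z₀).re = x - z₀.re := by intro y; simp
  have hne : ∀ y : ℝ, ((x : ℂ) + y * I - z₀) ≠ 0 := by
    intro y h
    have := hre y
    rw [h] at this
    simp at this
    linarith
  refine integral_eq_sub_of_hasDerivAt
      (f := fun y : ℝ => Complex.log ((x : ℂ) + (y : ℂ) * I - z₀)) ?_ ?_
  · intro y hy
    have hsp : ((x : ℂ) + y * I - z₀) ∈ Complex.slitPlane :=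
      Or.inl (by rw [hre y]; linarith)
    have hin : HasDerivAt (fun z : ℂ => (x : ℂ) + z * I - z₀) I y := by
      simpa using (((hasDerivAt_id ((y : ℝ) : ℂ)).mul_const I).const_add ((x : ℝ) : ℂ)).sub_const z₀
    have hlog0 := (Complex.hasDerivAt_log hsp).comp ((y : ℝ) : ℂ) hin
    have h2 := hlog0.comp_ofReal
    simp only [Function.comp_def] at h2
    exact h2
  · apply ContinuousOn.intervalIntegrable
    apply ContinuousOn.mul ?_ continuousOn_const
    refine ContinuousOn.inv₀ (by fun_prop) fun y _ => hne y

lemma integral_vert_inv_left {z₀ : ℂ} {y₁ y₂ x : ℝ} (hx : x < z₀.re) :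
    ∫ y : ℝ in y₁..y₂, ((x : ℂ) + y * I - z₀)⁻¹ * I =
      Complex.log (-((x : ℂ) + y₂ * I - z₀)) - Complex.log (-((x : ℂ) + y₁ * I - z₀)) := by
  have hre : ∀ y : ℝ, (-((x : ℂ) + y * I - z₀)).re = z₀.re - x := by intro y; simp
  have hne : ∀ y : ℝ, ((x : ℂ) + y * I - z₀) ≠ 0 := by
    intro y h
    have := hre y
    rw [h] at this
    simp at this
    linarith
  refine integral_eq_sub_of_hasDerivAt
      (f := fun y : ℝ => Complex.log (-((x : ℂ) + (y : ℂ) * I - z₀))) ?_ ?_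
  · intro y hy
    have hsp : (-((x : ℂ) + y * I - z₀)) ∈ Complex.slitPlane :=
      Or.inl (by rw [hre y]; linarith)
    have hin : HasDerivAt (fun z : ℂ => -((x : ℂ) + z * I - z₀)) (-I) y := by
      have h := ((((hasDerivAt_id ((y : ℝ) : ℂ)).mul_const I).const_add ((x : ℝ) : ℂ)).sub_const z₀).neg
      simp only [id, one_mul] at h
      exact h
    have hlog0 := (Complex.hasDerivAt_log hsp).comp ((y : ℝ) : ℂ) hin
    have h2 := hlog0.comp_ofReal
    simp only [Function.comp_def] at h2
    have hval : (-((x : ℂ) + (y:ℝ) * I - z₀))⁻¹ * (-I) = (((x : ℂ) + (y:ℝ) * I - z₀))⁻¹ * I := by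
      rw [inv_neg]; ring
    rw [← hval]
    exact h2
  · apply ContinuousOn.intervalIntegrable
    apply ContinuousOn.mul ?_ continuousOn_const
    refine ContinuousOn.inv₀ (by fun_prop) fun y _ => hne y

lemma log_sum {ε : ℝ} (hε : 0 < ε) :
    Complex.log (-(ε:ℂ) + ε * I) - Complex.log (-(ε:ℂ) - ε * I) +
      (Complex.log ((ε:ℂ) + ε * I) - Complex.log ((ε:ℂ) - ε * I)) = 2 * Real.pi * I := by
  have hpi := Real.pi_pos
  have hr : (0:ℝ) < ε * Real.sqrt 2 := by positivity
  have hs2 : Real.sqrt 2 * Real.sqrt 2 = 2 := Real.mul_self_sqrt (by norm_num)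
  have hs2c : ((Real.sqrt 2 : ℝ) : ℂ) * ((Real.sqrt 2 : ℝ) : ℂ) = 2 := by exact_mod_cast hs2
  have h14 : ((ε * Real.sqrt 2 : ℝ) : ℂ) *
      (Complex.cos ((Real.pi/4 : ℝ) : ℂ) + Complex.sin ((Real.pi/4 : ℝ) : ℂ) * I)
      = (ε:ℂ) + ε * I := by
    rw [← Complex.ofReal_cos, ← Complex.ofReal_sin, Real.cos_pi_div_four, Real.sin_pi_div_four]
    push_cast
    linear_combination ((ε:ℂ)/2 + (ε:ℂ)/2 * I) * hs2c
  have hcos34 : Real.cos (3*Real.pi/4) = -(Real.sqrt 2/2) := by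
    rw [show 3*Real.pi/4 = Real.pi - Real.pi/4 by ring, Real.cos_pi_sub, Real.cos_pi_div_four]
  have hsin34 : Real.sin (3*Real.pi/4) = Real.sqrt 2/2 := by
    rw [show 3*Real.pi/4 = Real.pi - Real.pi/4 by ring, Real.sin_pi_sub, Real.sin_pi_div_four]
  have h34 : ((ε * Real.sqrt 2 : ℝ) : ℂ) *
      (Complex.cos ((3*Real.pi/4 : ℝ) : ℂ) + Complex.sin ((3*Real.pi/4 : ℝ) : ℂ) * I)
      = -(ε:ℂ) + ε * I := by
    rw [← Complex.ofReal_cos, ← Complex.ofReal_sin, hcos34, hsin34]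
    push_cast
    linear_combination (-(ε:ℂ)/2 + (ε:ℂ)/2 * I) * hs2c
  have harg1 : Complex.arg ((ε:ℂ) + ε * I) = Real.pi/4 := by
    rw [← h14, Complex.arg_real_mul _ hr,
      Complex.arg_cos_add_sin_mul_I ⟨by linarith, by linarith⟩]
  have harg2 : Complex.arg (-(ε:ℂ) + ε * I) = 3*Real.pi/4 := by
    rw [← h34, Complex.arg_real_mul _ hr,
      Complex.arg_cos_add_sin_mul_I ⟨by linarith, by linarith⟩]
  have hc1 : ((ε:ℂ) - ε * I) = (starRingEnd ℂ) ((ε:ℂ) + ε * I) := by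
    apply Complex.ext <;> simp
  have hc2 : (-(ε:ℂ) - ε * I) = (starRingEnd ℂ) (-(ε:ℂ) + ε * I) := by
    apply Complex.ext <;> simp
  have hne1 : Complex.arg ((ε:ℂ) + ε * I) ≠ Real.pi := by rw [harg1]; intro h; linarith
  have hne2 : Complex.arg (-(ε:ℂ) + ε * I) ≠ Real.pi := by rw [harg2]; intro h; linarith
  rw [hc1, hc2, Complex.log_conj _ hne2, Complex.log_conj _ hne1, Complex.sub_conj,
    Complex.sub_conj, Complex.log_im, Complex.log_im, harg1, harg2]
  push_cast
  ring

lemma RB_pole {c₀ : ℂ} {p φ ε : ℝ} (hε : 0 < ε) :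
    RB (fun s => c₀ * (s - ((p:ℂ) + (φ:ℂ) * I))⁻¹) (p - ε) (p + ε) (φ - ε) (φ + ε)
      = c₀ * (2 * Real.pi * I) := by
  set z₀ : ℂ := (p:ℂ) + (φ:ℂ) * I with hz₀
  have hz₀re : z₀.re = p := by simp [hz₀]
  have hz₀im : z₀.im = φ := by simp [hz₀]
  have e1 : ((p+ε : ℝ):ℂ) + ((φ-ε : ℝ):ℂ) * I - z₀ = (ε:ℂ) - ε * I := by
    rw [hz₀]; push_cast; ring
  have e2 : ((p-ε : ℝ):ℂ) + ((φ-ε : ℝ):ℂ) * I - z₀ = -(ε:ℂ) - ε * I := by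
    rw [hz₀]; push_cast; ring
  have e3 : ((p+ε : ℝ):ℂ) + ((φ+ε : ℝ):ℂ) * I - z₀ = (ε:ℂ) + ε * I := by
    rw [hz₀]; push_cast; ring
  have e4 : ((p-ε : ℝ):ℂ) + ((φ+ε : ℝ):ℂ) * I - z₀ = -(ε:ℂ) + ε * I := by
    rw [hz₀]; push_cast; ring
  have hJ1 : ∫ x : ℝ in (p-ε)..(p+ε), (((x:ℂ) + ((φ-ε : ℝ):ℂ) * I) - z₀)⁻¹
      = Complex.log ((ε:ℂ) - ε * I) - Complex.log (-(ε:ℂ) - ε * I) := by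
    have := integral_horiz_inv (z₀ := z₀) (x₁ := p-ε) (x₂ := p+ε) (y := φ-ε)
      (by rw [hz₀im]; linarith)
    rw [e1, e2] at this
    exact this
  have hJ2 : ∫ x : ℝ in (p-ε)..(p+ε), (((x:ℂ) + ((φ+ε : ℝ):ℂ) * I) - z₀)⁻¹
      = Complex.log ((ε:ℂ) + ε * I) - Complex.log (-(ε:ℂ) + ε * I) := by
    have := integral_horiz_inv (z₀ := z₀) (x₁ := p-ε) (x₂ := p+ε) (y := φ+ε)
      (by rw [hz₀im]; linarith)
    rw [e3, e4] at this
    exact this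
  have hK3 : ∫ y : ℝ in (φ-ε)..(φ+ε), ((((p+ε : ℝ):ℂ) + (y:ℂ) * I) - z₀)⁻¹ * I
      = Complex.log ((ε:ℂ) + ε * I) - Complex.log ((ε:ℂ) - ε * I) := by
    have := integral_vert_inv_right (z₀ := z₀) (y₁ := φ-ε) (y₂ := φ+ε) (x := p+ε)
      (by rw [hz₀re]; linarith)
    rw [e3, e1] at this
    exact this
  have hK4 : ∫ y : ℝ in (φ-ε)..(φ+ε), ((((p-ε : ℝ):ℂ) + (y:ℂ) * I) - z₀)⁻¹ * I
      = Complex.log ((ε:ℂ) - ε * I) - Complex.log ((ε:ℂ) + ε * I) := by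
    have := integral_vert_inv_left (z₀ := z₀) (y₁ := φ-ε) (y₂ := φ+ε) (x := p-ε)
      (by rw [hz₀re]; linarith)
    have e4' : -(((p-ε : ℝ):ℂ) + ((φ+ε : ℝ):ℂ) * I - z₀) = (ε:ℂ) - ε * I := by
      rw [hz₀]; push_cast; ring
    have e2' : -(((p-ε : ℝ):ℂ) + ((φ-ε : ℝ):ℂ) * I - z₀) = (ε:ℂ) + ε * I := by
      rw [hz₀]; push_cast; ring
    rw [e4', e2'] at this
    exact this
  have hI3 : I • ∫ y : ℝ in (φ-ε)..(φ+ε), c₀ * ((((p+ε : ℝ):ℂ) + (y:ℂ) * I) - z₀)⁻¹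
      = c₀ * (Complex.log ((ε:ℂ) + ε * I) - Complex.log ((ε:ℂ) - ε * I)) := by
    rw [intervalIntegral.integral_const_mul, ← hK3, intervalIntegral.integral_mul_const,
      smul_eq_mul]
    ring
  have hI4 : I • ∫ y : ℝ in (φ-ε)..(φ+ε), c₀ * ((((p-ε : ℝ):ℂ) + (y:ℂ) * I) - z₀)⁻¹
      = c₀ * (Complex.log ((ε:ℂ) - ε * I) - Complex.log ((ε:ℂ) + ε * I)) := by
    rw [intervalIntegral.integral_const_mul, ← hK4, intervalIntegral.integral_mul_const,
      smul_eq_mul]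
    ring
  rw [RB]
  rw [intervalIntegral.integral_const_mul, intervalIntegral.integral_const_mul, hJ1, hJ2,
    hI3, hI4]
  have := log_sum hε
  linear_combination c₀ * this

lemma jump {a : ℂ} {θ₀ : ℝ} (ha : a ≠ 0)
    (h₀ : -a = ((‖a‖ : ℝ) : ℂ) * Complex.exp (Complex.I * θ₀))
    {θ₁ θ₂ ρ φ : ℝ} (h2 : θ₀ - Real.pi/2 < θ₂) (h21 : θ₂ < θ₁) (h1 : θ₁ < θ₀ + Real.pi/2)
    (hρ : 0 < ρ) (hφ2 : θ₂ < φ) (hφ1 : φ < θ₁) :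
    (∫ t in Ioi (0:ℝ), rayIntegrand a ((ρ:ℂ) * Complex.exp (I * φ)) θ₂ t) -
      (∫ t in Ioi (0:ℝ), rayIntegrand a ((ρ:ℂ) * Complex.exp (I * φ)) θ₁ t) =
      (4 * Real.pi * I) * Complex.exp (a / ((ρ:ℂ) * Complex.exp (I * φ)) +
        (starRingEnd ℂ) a * ((ρ:ℂ) * Complex.exp (I * φ))) := by
  have hpi := Real.pi_pos
  set w : ℂ := (ρ:ℂ) * Complex.exp (I * φ) with hwdef
  have hw0 : w ≠ 0 := mul_ne_zero (Complex.ofReal_ne_zero.2 (ne_of_gt hρ)) (Complex.exp_ne_zero _)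
  have hwn : 0 < ‖w‖ := norm_pos_iff.2 hw0
  set p : ℝ := Real.log ρ with hpdef
  set s₀ : ℂ := (p:ℂ) + (φ:ℂ) * I with hs₀def
  have hs₀re : s₀.re = p := by simp [hs₀def]
  have hs₀im : s₀.im = φ := by simp [hs₀def]
  have hes₀ : Complex.exp s₀ = w := by
    rw [hs₀def, Complex.exp_add, ← Complex.ofReal_exp, Real.exp_log hρ, hwdef,
      mul_comm ((φ:ℝ):ℂ) I]
  -- uniqueness of the pole in the strip
  have huniq : ∀ s : ℂ, θ₂ ≤ s.im → s.im ≤ θ₁ → Complex.exp s = w → s = s₀ := by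
    intro s hs2 hs1 hsw
    have h := hsw.trans hes₀.symm
    rw [Complex.exp_eq_exp_iff_exists_int] at h
    obtain ⟨n, hn⟩ := h
    have him : s.im = φ + n * (2 * Real.pi) := by
      have := congrArg Complex.im hn
      simpa [hs₀def] using this
    have hn0 : n = 0 := by
      rcases lt_trichotomy n 0 with hlt | h0 | hgt
      · exfalso
        have hn1 : (n:ℝ) ≤ -1 := by exact_mod_cast (by omega : n ≤ -1)
        have : s.im ≤ φ - 2 * Real.pi := by nlinarith
        linarith
      · exact h0
      · exfalso
        have hn1 : (1:ℝ) ≤ (n:ℝ) := by exact_mod_cast (by omega : 1 ≤ n)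
        have : φ + 2 * Real.pi ≤ s.im := by nlinarith
        linarith
    rw [hn0] at hn
    simpa using hn
  have hwray : ∀ θ : ℝ, θ₂ ≤ θ → θ ≤ θ₁ → θ ≠ φ →
      ∀ t : ℝ, 0 < t → w ≠ (t:ℂ) * Complex.exp (I * θ) := by
    intro θ hθ2 hθ1 hθφ t ht heq
    have hsw : Complex.exp ((Real.log t : ℂ) + (θ:ℂ) * I) = w := by
      rw [Complex.exp_add, ← Complex.ofReal_exp, Real.exp_log ht, heq, mul_comm ((θ:ℝ):ℂ) I]
    have hthis := huniq _ (by simpa using hθ2) (by simpa using hθ1) hsw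
    apply hθφ
    have := congrArg Complex.im hthis
    simpa [hs₀def] using this
  have hHdiff : ∀ s : ℂ, θ₂ ≤ s.im → s.im ≤ θ₁ → s ≠ s₀ → DifferentiableAt ℂ (Hf a w) s :=
    fun s hh1 hh2 hh3 => Hf_diff (fun he => hh3 (huniq s hh1 hh2 he))
  -- dslope machinery
  set B : ℂ → ℂ := dslope (fun s => Complex.exp s - w) s₀ with hBdef
  have hM : Differentiable ℂ (fun s : ℂ => Complex.exp s - w) := by fun_prop
  have hBdiff : Differentiable ℂ B := by
    rw [← differentiableOn_univ]
    exact (Complex.differentiableOn_dslope Filter.univ_mem).mpr hM.differentiableOn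
  have hB0 : B s₀ = w := by
    rw [hBdef, dslope_same]
    have hD : HasDerivAt (fun s : ℂ => Complex.exp s - w) (Complex.exp s₀) s₀ :=
      (Complex.hasDerivAt_exp s₀).sub_const w
    rw [hD.deriv, hes₀]
  have hMB : ∀ s : ℂ, Complex.exp s - w = (s - s₀) * B s := by
    intro s
    have h := sub_smul_dslope (fun s => Complex.exp s - w) s₀ s
    rw [smul_eq_mul] at h
    simp only [hes₀, sub_self, sub_zero] at h
    rw [← h, hBdef]
  have hBne := hBdiff.continuous.continuousAt (x := s₀) |>.eventually_ne (by
    rw [hB0]; exact hw0)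
  rw [Metric.eventually_nhds_iff] at hBne
  obtain ⟨r, hr0, hrB⟩ := hBne
  set ε : ℝ := min (min ((φ - θ₂)/2) ((θ₁ - φ)/2)) (r/4) with hεdef
  have hε0 : 0 < ε := lt_min (lt_min (by linarith) (by linarith)) (by linarith)
  have hεa : ε ≤ (φ - θ₂)/2 := le_trans (min_le_left _ _) (min_le_left _ _)
  have hεb : ε ≤ (θ₁ - φ)/2 := le_trans (min_le_left _ _) (min_le_right _ _)
  have hεr : ε ≤ r/4 := min_le_right _ _
  have hQball : ∀ s : ℂ, s.re ∈ Icc (p - ε) (p + ε) → s.im ∈ Icc (φ - ε) (φ + ε) →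
      dist s s₀ < r := by
    intro s hre him
    rw [Complex.dist_eq]
    have h1 : |(s - s₀).re| ≤ ε := by
      rw [abs_le, Complex.sub_re, hs₀re]
      exact ⟨by linarith [hre.1], by linarith [hre.2]⟩
    have h2 : |(s - s₀).im| ≤ ε := by
      rw [abs_le, Complex.sub_im, hs₀im]
      exact ⟨by linarith [him.1], by linarith [him.2]⟩
    calc ‖s - s₀‖ ≤ |(s - s₀).re| + |(s - s₀).im| :=
          Complex.norm_le_abs_re_add_abs_im _
      _ ≤ ε + ε := add_le_add h1 h2
      _ < r := by linarith
  set G₀ : ℂ → ℂ := fun s =>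
    ((Complex.exp s + w) * Complex.exp (a * Complex.exp (-s) + (starRingEnd ℂ) a * Complex.exp s))
      / B s with hG₀def
  have hrB' : ∀ s ∈ Metric.ball s₀ r, B s ≠ 0 := fun s hs => hrB (Metric.mem_ball.1 hs)
  have hNdiff : Differentiable ℂ (fun s : ℂ => (Complex.exp s + w) *
      Complex.exp (a * Complex.exp (-s) + (starRingEnd ℂ) a * Complex.exp s)) := by fun_prop
  have hG₀d : DifferentiableOn ℂ G₀ (Metric.ball s₀ r) :=
    DifferentiableOn.div hNdiff.differentiableOn hBdiff.differentiableOn hrB'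
  have hdsl : DifferentiableOn ℂ (dslope G₀ s₀) (Metric.ball s₀ r) :=
    (Complex.differentiableOn_dslope (Metric.ball_mem_nhds s₀ hr0)).mpr hG₀d
  have hc₀ : G₀ s₀ = 2 * Complex.exp (a / w + (starRingEnd ℂ) a * w) := by
    rw [hG₀def]
    simp only [hB0, Complex.exp_neg, hes₀]
    rw [div_eq_mul_inv a w]
    field_simp
    ring
  have hedge : ∀ s : ℂ, dist s s₀ < r → s ≠ s₀ →
      Hf a w s = dslope G₀ s₀ s + G₀ s₀ * (s - s₀)⁻¹ := by
    intro s hs hne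
    have hBs : B s ≠ 0 := hrB hs
    have hss : s - s₀ ≠ 0 := sub_ne_zero.2 hne
    have hG₀s : G₀ s = ((Complex.exp s + w) *
        Complex.exp (a * Complex.exp (-s) + (starRingEnd ℂ) a * Complex.exp s)) / B s := by
      simp only [hG₀def]
    rw [dslope_of_ne _ hne, slope_def_field]
    have hRHS : (G₀ s - G₀ s₀) / (s - s₀) + G₀ s₀ * (s - s₀)⁻¹ = G₀ s / (s - s₀) := by
      field_simp
      ring
    rw [hRHS, hG₀s, div_div, mul_comm (B s) (s - s₀), ← hMB s]
    rfl
  -- continuity helpers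
  have hHcont : ∀ s : ℂ, θ₂ ≤ s.im → s.im ≤ θ₁ → s ≠ s₀ → ContinuousAt (Hf a w) s :=
    fun s hh1 hh2 hh3 => (hHdiff s hh1 hh2 hh3).continuousAt
  have hHoriz : ∀ x₁ x₂ y : ℝ, θ₂ ≤ y → y ≤ θ₁ → y ≠ φ →
      IntervalIntegrable (fun x : ℝ => Hf a w ((x:ℂ) + (y:ℂ) * I)) volume x₁ x₂ := by
    intro x₁ x₂ y hy1 hy2 hy3
    apply ContinuousOn.intervalIntegrable
    intro x _
    apply ContinuousAt.continuousWithinAt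
    have hne : ((x:ℂ) + (y:ℂ) * I) ≠ s₀ := by
      intro h
      apply hy3
      have := congrArg Complex.im h
      simpa [hs₀def] using this
    exact ContinuousAt.comp (x := x) (g := Hf a w)
      (hHcont _ (by simpa using hy1) (by simpa using hy2) hne) (by fun_prop)
  have hVert : ∀ x y₁ y₂ : ℝ, θ₂ ≤ y₁ → y₁ ≤ y₂ → y₂ ≤ θ₁ → x ≠ p →
      IntervalIntegrable (fun y : ℝ => Hf a w ((x:ℂ) + (y:ℂ) * I)) volume y₁ y₂ := by
    intro x y₁ y₂ hy1 hy12 hy2 hxp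
    apply ContinuousOn.intervalIntegrable
    intro y hy
    rw [uIcc_of_le hy12] at hy
    apply ContinuousAt.continuousWithinAt
    have hne : ((x:ℂ) + (y:ℂ) * I) ≠ s₀ := by
      intro h
      apply hxp
      have := congrArg Complex.re h
      simpa [hs₀def] using this
    exact ContinuousAt.comp (x := y) (g := Hf a w)
      (hHcont _ (by simp; linarith [hy.1]) (by simp; linarith [hy.2]) hne) (by fun_prop)
  -- the square value
  have hsq : RB (Hf a w) (p - ε) (p + ε) (φ - ε) (φ + ε)
      = G₀ s₀ * (2 * Real.pi * I) := by
    have hbd : ∀ s : ℂ, s.re ∈ Icc (p - ε) (p + ε) → s.im ∈ Icc (φ - ε) (φ + ε) → s ≠ s₀ →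
        Hf a w s = dslope G₀ s₀ s + G₀ s₀ * (s - s₀)⁻¹ :=
      fun s hh1 hh2 hh3 => hedge s (hQball s hh1 hh2) hh3
    have hmemx : ∀ x : ℝ, x ∈ uIcc (p - ε) (p + ε) → x ∈ Icc (p - ε) (p + ε) := by
      intro x hx
      rwa [uIcc_of_le (by linarith)] at hx
    have hmemy : ∀ y : ℝ, y ∈ uIcc (φ - ε) (φ + ε) → y ∈ Icc (φ - ε) (φ + ε) := by
      intro y hy
      rwa [uIcc_of_le (by linarith)] at hy
    have hnex : ∀ (x : ℝ) (y : ℝ), y ≠ φ → ((x:ℂ) + (y:ℂ) * I) ≠ s₀ := by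
      intro x y hy h
      apply hy
      have := congrArg Complex.im h
      simpa [hs₀def] using this
    have hney : ∀ (x : ℝ) (y : ℝ), x ≠ p → ((x:ℂ) + (y:ℂ) * I) ≠ s₀ := by
      intro x y hx h
      apply hx
      have := congrArg Complex.re h
      simpa [hs₀def] using this
    have hRBeq : RB (Hf a w) (p - ε) (p + ε) (φ - ε) (φ + ε)
        = RB (fun s => dslope G₀ s₀ s + G₀ s₀ * (s - s₀)⁻¹) (p - ε) (p + ε) (φ - ε) (φ + ε) := by
      unfold RB
      rw [intervalIntegral.integral_congr (g := fun x : ℝ =>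
          dslope G₀ s₀ ((x:ℂ) + ((φ - ε : ℝ):ℂ) * I) + G₀ s₀ * (((x:ℂ) + ((φ - ε : ℝ):ℂ) * I) - s₀)⁻¹)
          (fun x hx => hbd _ (by simpa using hmemx x hx) (by rw [show ((x:ℂ) + ((φ - ε : ℝ):ℂ) * I).im = φ - ε by simp]; exact Set.mem_Icc.2 ⟨by linarith, by linarith⟩)
            (hnex _ _ (by intro h; linarith [hε0]))),
        intervalIntegral.integral_congr (g := fun x : ℝ =>
          dslope G₀ s₀ ((x:ℂ) + ((φ + ε : ℝ):ℂ) * I) + G₀ s₀ * (((x:ℂ) + ((φ + ε : ℝ):ℂ) * I) - s₀)⁻¹)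
          (fun x hx => hbd _ (by simpa using hmemx x hx) (by rw [show ((x:ℂ) + ((φ + ε : ℝ):ℂ) * I).im = φ + ε by simp]; exact Set.mem_Icc.2 ⟨by linarith, by linarith⟩)
            (hnex _ _ (by intro h; linarith [hε0]))),
        intervalIntegral.integral_congr (g := fun y : ℝ =>
          dslope G₀ s₀ (((p + ε : ℝ):ℂ) + (y:ℂ) * I) + G₀ s₀ * ((((p + ε : ℝ):ℂ) + (y:ℂ) * I) - s₀)⁻¹)
          (fun y hy => hbd _ (by rw [show (((p + ε : ℝ):ℂ) + (y:ℂ) * I).re = p + ε by simp]; exact Set.mem_Icc.2 ⟨by linarith, by linarith⟩) (by simpa using hmemy y hy)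
            (hney _ _ (by intro h; linarith [hε0]))),
        intervalIntegral.integral_congr (g := fun y : ℝ =>
          dslope G₀ s₀ (((p - ε : ℝ):ℂ) + (y:ℂ) * I) + G₀ s₀ * ((((p - ε : ℝ):ℂ) + (y:ℂ) * I) - s₀)⁻¹)
          (fun y hy => hbd _ (by rw [show (((p - ε : ℝ):ℂ) + (y:ℂ) * I).re = p - ε by simp]; exact Set.mem_Icc.2 ⟨by linarith, by linarith⟩) (by simpa using hmemy y hy)
            (hney _ _ (by intro h; linarith [hε0])))]
    have hdslC : ∀ s : ℂ, dist s s₀ < r → ContinuousAt (dslope G₀ s₀) s := by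
      intro s hs
      exact (hdsl.differentiableAt (Metric.isOpen_ball.mem_nhds (Metric.mem_ball.2 hs))).continuousAt
    have hpoleC : ∀ s : ℂ, s ≠ s₀ → ContinuousAt (fun s : ℂ => G₀ s₀ * (s - s₀)⁻¹) s := by
      intro s hs
      exact continuousAt_const.mul ((continuousAt_id.sub continuousAt_const).inv₀
        (sub_ne_zero.2 hs))
    have hIdsH : ∀ y : ℝ, y ∈ Icc (φ - ε) (φ + ε) →
        IntervalIntegrable (fun x : ℝ => dslope G₀ s₀ ((x:ℂ) + (y:ℂ) * I)) volume (p - ε) (p + ε) := by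
      intro y hy
      apply ContinuousOn.intervalIntegrable
      intro x hx
      exact (ContinuousAt.comp (x := x) (g := dslope G₀ s₀)
        (hdslC _ (hQball _ (by simpa using hmemx x hx) (by simpa using hy))) (by fun_prop)).continuousWithinAt
    have hIdsV : ∀ x : ℝ, x ∈ Icc (p - ε) (p + ε) →
        IntervalIntegrable (fun y : ℝ => dslope G₀ s₀ ((x:ℂ) + (y:ℂ) * I)) volume (φ - ε) (φ + ε) := by
      intro x hx
      apply ContinuousOn.intervalIntegrable
      intro y hy
      exact (ContinuousAt.comp (x := y) (g := dslope G₀ s₀)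
        (hdslC _ (hQball _ (by simpa using hx) (by simpa using hmemy y hy))) (by fun_prop)).continuousWithinAt
    have hIpH : ∀ y : ℝ, y ≠ φ →
        IntervalIntegrable (fun x : ℝ => G₀ s₀ * (((x:ℂ) + (y:ℂ) * I) - s₀)⁻¹) volume (p - ε) (p + ε) := by
      intro y hy
      apply ContinuousOn.intervalIntegrable
      intro x _
      exact (ContinuousAt.comp (x := x) (g := fun s : ℂ => G₀ s₀ * (s - s₀)⁻¹)
        (hpoleC _ (hnex _ _ hy)) (by fun_prop)).continuousWithinAt
    have hIpV : ∀ x : ℝ, x ≠ p →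
        IntervalIntegrable (fun y : ℝ => G₀ s₀ * (((x:ℂ) + (y:ℂ) * I) - s₀)⁻¹) volume (φ - ε) (φ + ε) := by
      intro x hx
      apply ContinuousOn.intervalIntegrable
      intro y _
      exact (ContinuousAt.comp (x := y) (g := fun s : ℂ => G₀ s₀ * (s - s₀)⁻¹)
        (hpoleC _ (hney _ _ hx)) (by fun_prop)).continuousWithinAt
    have hadd := RB_add (f := dslope G₀ s₀) (g := fun s : ℂ => G₀ s₀ * (s - s₀)⁻¹)
      (hIdsH (φ - ε) (Set.mem_Icc.2 ⟨by linarith, by linarith⟩))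
      (hIdsH (φ + ε) (Set.mem_Icc.2 ⟨by linarith, by linarith⟩))
      (hIdsV (p + ε) (Set.mem_Icc.2 ⟨by linarith, by linarith⟩))
      (hIdsV (p - ε) (Set.mem_Icc.2 ⟨by linarith, by linarith⟩))
      (hIpH (φ - ε) (by intro h; linarith))
      (hIpH (φ + ε) (by intro h; linarith))
      (hIpV (p + ε) (by intro h; linarith))
      (hIpV (p - ε) (by intro h; linarith))
    have hz : RB (dslope G₀ s₀) (p - ε) (p + ε) (φ - ε) (φ + ε) = 0 := by
      apply RB_eq_zero (by linarith) (by linarith)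
      intro s hre him
      exact hdsl.differentiableAt (Metric.isOpen_ball.mem_nhds (Metric.mem_ball.2
        (hQball s hre him)))
    have hp : RB (fun s : ℂ => G₀ s₀ * (s - s₀)⁻¹) (p - ε) (p + ε) (φ - ε) (φ + ε)
        = G₀ s₀ * (2 * Real.pi * I) := by
      have := RB_pole (c₀ := G₀ s₀) (p := p) (φ := φ) hε0
      rw [← hs₀def] at this
      exact this
    rw [hRBeq]
    exact hadd.trans (by rw [hz, hp, zero_add])
  -- decomposition for large R
  have key : ∀ R : ℝ, -R < p - ε → p + ε < R →
      RB (Hf a w) (-R) R θ₂ θ₁ = G₀ s₀ * (2 * Real.pi * I) := by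
    intro R hR1 hR2
    have hθ2φ : θ₂ ≠ φ := ne_of_lt hφ2
    have hθ1φ : θ₁ ≠ φ := ne_of_gt hφ1
    have hs1 : RB (Hf a w) (-R) R θ₂ θ₁ = RB (Hf a w) (-R) (p - ε) θ₂ θ₁ +
        (RB (Hf a w) (p - ε) (p + ε) θ₂ θ₁ + RB (Hf a w) (p + ε) R θ₂ θ₁) := by
      rw [← RB_hsplit (hHoriz _ _ _ le_rfl (le_of_lt h21) hθ2φ)
          (hHoriz _ _ _ le_rfl (le_of_lt h21) hθ2φ)
          (hHoriz _ _ _ (le_of_lt h21) le_rfl hθ1φ)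
          (hHoriz _ _ _ (le_of_lt h21) le_rfl hθ1φ)]
      exact RB_hsplit (hHoriz _ _ _ le_rfl (le_of_lt h21) hθ2φ)
          (hHoriz _ _ _ le_rfl (le_of_lt h21) hθ2φ)
          (hHoriz _ _ _ (le_of_lt h21) le_rfl hθ1φ)
          (hHoriz _ _ _ (le_of_lt h21) le_rfl hθ1φ)
    have hleft : RB (Hf a w) (-R) (p - ε) θ₂ θ₁ = 0 := by
      apply RB_eq_zero (by linarith) (le_of_lt h21)
      intro s hre him
      refine hHdiff s him.1 him.2 fun h => ?_
      rw [h, hs₀re] at hre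
      have := hre.2
      linarith
    have hright : RB (Hf a w) (p + ε) R θ₂ θ₁ = 0 := by
      apply RB_eq_zero (by linarith) (le_of_lt h21)
      intro s hre him
      refine hHdiff s him.1 him.2 fun h => ?_
      rw [h, hs₀re] at hre
      have := hre.1
      linarith
    have hs2 : RB (Hf a w) (p - ε) (p + ε) θ₂ θ₁ =
        RB (Hf a w) (p - ε) (p + ε) θ₂ (φ - ε) +
        (RB (Hf a w) (p - ε) (p + ε) (φ - ε) (φ + ε) +
          RB (Hf a w) (p - ε) (p + ε) (φ + ε) θ₁) := by
      rw [RB_vsplit (hVert (p - ε) θ₂ (φ - ε) le_rfl (by linarith) (by linarith)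
            (by intro h; linarith))
          (hVert (p - ε) (φ - ε) θ₁ (by linarith) (by linarith) le_rfl (by intro h; linarith))
          (hVert (p + ε) θ₂ (φ - ε) le_rfl (by linarith) (by linarith) (by intro h; linarith))
          (hVert (p + ε) (φ - ε) θ₁ (by linarith) (by linarith) le_rfl (by intro h; linarith))]
      congr 1
      exact RB_vsplit (hVert (p - ε) (φ - ε) (φ + ε) (by linarith) (by linarith) (by linarith)
            (by intro h; linarith))
          (hVert (p - ε) (φ + ε) θ₁ (by linarith) (by linarith) le_rfl (by intro h; linarith))
          (hVert (p + ε) (φ - ε) (φ + ε) (by linarith) (by linarith) (by linarith)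
            (by intro h; linarith))
          (hVert (p + ε) (φ + ε) θ₁ (by linarith) (by linarith) le_rfl (by intro h; linarith))
    have hbot : RB (Hf a w) (p - ε) (p + ε) θ₂ (φ - ε) = 0 := by
      apply RB_eq_zero (by linarith) (by linarith)
      intro s hre him
      refine hHdiff s him.1 (by linarith [him.2]) fun h => ?_
      rw [h, hs₀im] at him
      have := him.2
      linarith
    have htop : RB (Hf a w) (p - ε) (p + ε) (φ + ε) θ₁ = 0 := by
      apply RB_eq_zero (by linarith) (by linarith)
      intro s hre him
      refine hHdiff s (by linarith [him.1]) him.2 fun h => ?_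
      rw [h, hs₀im] at him
      have := him.1
      linarith
    rw [hs1, hleft, hright, hs2, hbot, htop, hsq]
    ring
  -- line integrability
  have hθ2abs : |θ₂ - θ₀| < Real.pi/2 := abs_sub_lt_iff.2 ⟨by linarith, by linarith⟩
  have hθ1abs : |θ₁ - θ₀| < Real.pi/2 := abs_sub_lt_iff.2 ⟨by linarith, by linarith⟩
  have hL2 : Integrable (fun x : ℝ => Hf a w ((x:ℂ) + (θ₂:ℂ) * I)) :=
    lineIntegrable ha h₀ hθ2abs (hwray θ₂ le_rfl (le_of_lt h21) (ne_of_lt hφ2))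
  have hL1 : Integrable (fun x : ℝ => Hf a w ((x:ℂ) + (θ₁:ℂ) * I)) :=
    lineIntegrable ha h₀ hθ1abs (hwray θ₁ (le_of_lt h21) le_rfl (ne_of_gt hφ1))
  have hT2 : Tendsto (fun R : ℝ => ∫ x in (-R)..R, Hf a w ((x:ℂ) + (θ₂:ℂ) * I)) atTop
      (𝓝 (∫ x : ℝ, Hf a w ((x:ℂ) + (θ₂:ℂ) * I))) :=
    intervalIntegral_tendsto_integral hL2 Filter.tendsto_neg_atTop_atBot tendsto_id
  have hT1 : Tendsto (fun R : ℝ => ∫ x in (-R)..R, Hf a w ((x:ℂ) + (θ₁:ℂ) * I)) atTop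
      (𝓝 (∫ x : ℝ, Hf a w ((x:ℂ) + (θ₁:ℂ) * I))) :=
    intervalIntegral_tendsto_integral hL1 Filter.tendsto_neg_atTop_atBot tendsto_id
  have hA : 0 < ‖a‖ := norm_pos_iff.mpr ha
  set κ : ℝ := min (Real.cos (θ₂ - θ₀)) (Real.cos (θ₁ - θ₀)) with hκdef
  have hκ : 0 < κ := cos_lower_pos h2 (le_of_lt h21) h1
  have hHnorm : ∀ x y : ℝ, θ₂ ≤ y → y ≤ θ₁ →
      (2 * ‖w‖ ≤ Real.exp x ∨ Real.exp x ≤ ‖w‖/2) →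
      ‖Hf a w ((x:ℂ) + (y:ℂ) * I)‖ ≤
        3 * Real.exp (-(‖a‖ * κ * (Real.exp x + Real.exp (-x)))) := by
    intro x y hy1 hy2 hcase
    have hsre : ((x:ℂ) + (y:ℂ) * I).re = x := by simp
    have hsim : ((x:ℂ) + (y:ℂ) * I).im = y := by simp
    have hE := exp_term_norm h₀ ((x:ℂ) + (y:ℂ) * I)
    rw [hsre, hsim] at hE
    rw [Hf, mul_div_right_comm, norm_mul, hE]
    have hzx : ‖Complex.exp ((x:ℂ) + (y:ℂ) * I)‖ = Real.exp x := by
      rw [Complex.norm_exp, hsre]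
    have hfrac : ‖(Complex.exp ((x:ℂ) + (y:ℂ) * I) + w) /
        (Complex.exp ((x:ℂ) + (y:ℂ) * I) - w)‖ ≤ 3 := by
      rcases hcase with hbig | hsmall
      · exact frac_big (by rw [hzx]; exact hbig) (Complex.exp_ne_zero _)
      · exact frac_small hw0 (by rw [hzx]; exact hsmall)
    have hee : Real.exp (-(‖a‖ * Real.cos (y - θ₀) * (Real.exp x + Real.exp (-x)))) ≤
        Real.exp (-(‖a‖ * κ * (Real.exp x + Real.exp (-x)))) := by
      rw [Real.exp_le_exp]
      have hcl := cos_lower h2 h1 hy1 hy2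
      have hpos : (0:ℝ) ≤ Real.exp x + Real.exp (-x) := by positivity
      have hkey := mul_le_mul_of_nonneg_left (mul_le_mul_of_nonneg_right hcl hpos) hA.le
      rw [hκdef]
      linarith
    exact mul_le_mul hfrac hee (le_of_lt (Real.exp_pos _)) (by norm_num)
  set R₀ : ℝ := max (max (|p| + ε + 1) (Real.log (2 * ‖w‖ + 1) + 1)) (1 - Real.log (‖w‖/2))
    with hR₀def
  have hR₀1 : ∀ R, R₀ ≤ R → -R < p - ε ∧ p + ε < R := by
    intro R hR
    have h1' : |p| + ε + 1 ≤ R := le_trans (le_trans (le_max_left _ _) (le_max_left _ _)) hR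
    constructor
    · have := neg_abs_le p; linarith
    · have := le_abs_self p; linarith
  have hR₀2 : ∀ R, R₀ ≤ R → 2 * ‖w‖ ≤ Real.exp R := by
    intro R hR
    have h1' : Real.log (2 * ‖w‖ + 1) + 1 ≤ R :=
      le_trans (le_trans (le_max_right _ _) (le_max_left _ _)) hR
    have h2' : Real.exp (Real.log (2 * ‖w‖ + 1)) ≤ Real.exp R := Real.exp_le_exp.2 (by linarith)
    rw [Real.exp_log (by linarith)] at h2'
    linarith
  have hR₀3 : ∀ R, R₀ ≤ R → Real.exp (-R) ≤ ‖w‖/2 := by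
    intro R hR
    have h1' : 1 - Real.log (‖w‖/2) ≤ R := le_trans (le_max_right _ _) hR
    have h2' : Real.exp (-R) ≤ Real.exp (Real.log (‖w‖/2)) := Real.exp_le_exp.2 (by linarith)
    rwa [Real.exp_log (by linarith)] at h2'
  have hgb : Tendsto (fun R : ℝ =>
      3 * Real.exp (-(‖a‖ * κ * Real.exp R)) * |θ₁ - θ₂|) atTop (𝓝 0) := by
    have h1' : Tendsto (fun R : ℝ => ‖a‖ * κ * Real.exp R) atTop atTop :=
      Real.tendsto_exp_atTop.const_mul_atTop (mul_pos hA hκ)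
    have h2' : Tendsto (fun R : ℝ => -(‖a‖ * κ * Real.exp R)) atTop atBot :=
      Filter.tendsto_neg_atTop_atBot.comp h1'
    have h3' := Real.tendsto_exp_atBot.comp h2'
    have h4' := (h3'.const_mul (3:ℝ)).mul_const |θ₁ - θ₂|
    simpa using h4'
  have hexpR : ∀ R : ℝ, Real.exp R ≤ Real.exp R + Real.exp (-R) := by
    intro R
    have := Real.exp_pos (-R)
    linarith
  have hmono : ∀ R : ℝ, Real.exp (-(‖a‖ * κ * (Real.exp R + Real.exp (-R)))) ≤
      Real.exp (-(‖a‖ * κ * Real.exp R)) := by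
    intro R
    rw [Real.exp_le_exp]
    have hkey := mul_le_mul_of_nonneg_left (hexpR R) (mul_pos hA hκ).le
    linarith
  have hT3 : Tendsto (fun R : ℝ => ∫ y in θ₂..θ₁, Hf a w ((R:ℂ) + (y:ℂ) * I)) atTop (𝓝 0) := by
    apply squeeze_zero_norm' _ hgb
    filter_upwards [eventually_ge_atTop R₀] with R hR
    refine intervalIntegral.norm_integral_le_of_norm_le_const fun y hy => ?_
    rw [uIoc_of_le (le_of_lt h21)] at hy
    refine le_trans (hHnorm R y (le_of_lt hy.1) hy.2 (Or.inl (hR₀2 R hR))) ?_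
    have := hmono R
    nlinarith [this]
  have hT4 : Tendsto (fun R : ℝ => ∫ y in θ₂..θ₁, Hf a w (((-R : ℝ):ℂ) + (y:ℂ) * I)) atTop
      (𝓝 0) := by
    apply squeeze_zero_norm' _ hgb
    filter_upwards [eventually_ge_atTop R₀] with R hR
    refine intervalIntegral.norm_integral_le_of_norm_le_const fun y hy => ?_
    rw [uIoc_of_le (le_of_lt h21)] at hy
    have hb := hHnorm (-R) y (le_of_lt hy.1) hy.2 (Or.inr (hR₀3 R hR))
    rw [neg_neg] at hb
    refine le_trans hb ?_
    have := hmono R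
    have hcomm : Real.exp (-R) + Real.exp R = Real.exp R + Real.exp (-R) := by ring
    rw [hcomm]
    nlinarith [this]
  have hRBT : Tendsto (fun R : ℝ => RB (Hf a w) (-R) R θ₂ θ₁) atTop
      (𝓝 ((∫ x : ℝ, Hf a w ((x:ℂ) + (θ₂:ℂ) * I)) - (∫ x : ℝ, Hf a w ((x:ℂ) + (θ₁:ℂ) * I))
        + I • (0:ℂ) - I • (0:ℂ))) := by
    simp only [RB]
    exact ((hT2.sub hT1).add (hT3.const_smul I)).sub (hT4.const_smul I)
  have hconstT : Tendsto (fun R : ℝ => RB (Hf a w) (-R) R θ₂ θ₁) atTop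
      (𝓝 (G₀ s₀ * (2 * Real.pi * I))) := by
    apply Tendsto.congr' _ tendsto_const_nhds
    filter_upwards [eventually_ge_atTop R₀] with R hR
    obtain ⟨hc1, hc2⟩ := hR₀1 R hR
    exact (key R hc1 hc2).symm
  have hfin := tendsto_nhds_unique hRBT hconstT
  simp only [smul_zero, add_zero, sub_zero] at hfin
  rw [cov w θ₂, cov w θ₁, hfin, hc₀]
  ring

end RayProof

theorem ray_integral_converges_and_jump
    (a : ℂ) (ha : a ≠ 0) (θ₀ : ℝ)
    (h₀ : -a = ((‖a‖ : ℝ) : ℂ) * Complex.exp (Complex.I * θ₀)) :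
    (∀ (θ : ℝ) (w : ℂ), |θ - θ₀| < Real.pi / 2 →
      (∀ t : ℝ, 0 < t → w ≠ (t : ℂ) * Complex.exp (Complex.I * θ)) →
      IntegrableOn (rayIntegrand a w θ) (Set.Ioi 0)) ∧
    (∀ θ₁ θ₂ ρ φ : ℝ, θ₀ - Real.pi / 2 < θ₂ → θ₂ < θ₁ → θ₁ < θ₀ + Real.pi / 2 →
      0 < ρ → θ₂ < φ → φ < θ₁ →
      rayI a ((ρ : ℂ) * Complex.exp (Complex.I * φ)) θ₂
          - rayI a ((ρ : ℂ) * Complex.exp (Complex.I * φ)) θ₁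
        = Complex.exp (a / ((ρ : ℂ) * Complex.exp (Complex.I * φ)) +
            (starRingEnd ℂ) a * ((ρ : ℂ) * Complex.exp (Complex.I * φ)))) := by
  constructor
  · intro θ w hθ hw
    exact RayProof.partA ha h₀ hθ hw
  · intro θ₁ θ₂ ρ φ h2 h21 h1 hρ hφ2 hφ1
    have hj := RayProof.jump ha h₀ h2 h21 h1 hρ hφ2 hφ1
    rw [rayI, rayI, ← mul_sub, hj]
    have hπ : (Real.pi : ℂ) ≠ 0 := Complex.ofReal_ne_zero.2 (ne_of_gt Real.pi_pos)
    field_simp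
end
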